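/- arXiv:2301.08574 — 5 statements merged into one kernel-verified Lean document; each statement's English description precedes it below -/
import Mathlib

section
/- In U_q(gl(M|N)), for indices i < j < m < n the composite root vectors commute: E_{ij} E_{mn} = E_{mn} E_{ij} and F_{mn} F_{ij} = F_{ij} F_{mn}. -/
noncomputable section

/-- The parity `[i]` of the index `i` in `gl(M|N)`: `0` if `i ≤ M`, `1` otherwise. -/
def par (M i : ℕ) : ℕ := if i ≤ M then 0 else 1

/-- `dd M i = (-1)^[i]`. -/
def dd (M i : ℕ) : ℤ := if i ≤ M then 1 else -1

/-- The data of a representation of the Drinfeld–Jimbo–Yamane presentation of the quantum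
superalgebra `U_q(gl(M|N))` in a `ℂ`-algebra `A`.  Here `q = exp ℏ`, the generators are
`E i`, `F i` for `1 ≤ i ≤ M + N - 1`, and `K i ν` stands for `q^{ν K_i}`.  The fields are
exactly the defining relations (including all Serre relations). -/
structure UqGL (M N : ℕ) (A : Type*) [Ring A] [Algebra ℂ A] where
  ℏ : ℂ
  /-- `q` is not a root of unity; in particular `q ≠ ± 1`. -/
  q_ne_one : Complex.exp (2 * ℏ) ≠ 1
  E : ℕ → A
  F : ℕ → A
  K : ℕ → ℂ → A
  K_zero : ∀ i, K i 0 = 1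
  K_add : ∀ i ν μ, K i ν * K i μ = K i (ν + μ)
  K_comm : ∀ i j ν μ, K i ν * K j μ = K j μ * K i ν
  K_E : ∀ i j ν, K i ν * E j =
    Complex.exp (ℏ * ν * ((if i = j then 1 else 0) - (if i = j + 1 then 1 else 0))) •
      (E j * K i ν)
  K_F : ∀ i j ν, K i ν * F j =
    Complex.exp (-(ℏ * ν * ((if i = j then 1 else 0) - (if i = j + 1 then 1 else 0)))) •
      (F j * K i ν)
  EF : ∀ i j, 1 ≤ i → i < M + N → 1 ≤ j → j < M + N →
    E i * F j -
        ((-1 : ℂ) ^ ((par M i + par M (i + 1)) * (par M j + par M (j + 1)))) • (F j * E i) =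
      if i = j then
        (Complex.exp (ℏ * (dd M i : ℂ)) - Complex.exp (-(ℏ * (dd M i : ℂ))))⁻¹ •
          (K i (dd M i : ℂ) * K (i + 1) (-(dd M (i + 1) : ℂ)) -
            K i (-(dd M i : ℂ)) * K (i + 1) (dd M (i + 1) : ℂ))
      else 0
  EE_far : ∀ i j, 1 ≤ i → j < M + N → i + 1 < j → E i * E j = E j * E i
  FF_far : ∀ i j, 1 ≤ i → j < M + N → i + 1 < j → F i * F j = F j * F i
  E_M_sq : E M * E M = 0
  F_M_sq : F M * F M = 0
  serre_E_down : ∀ i, 2 ≤ i → i < M + N → i ≠ M →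
    E (i - 1) * (E i * E i) - (Complex.exp ℏ + Complex.exp (-ℏ)) • (E i * (E (i - 1) * E i)) +
      E i * E i * E (i - 1) = 0
  serre_F_down : ∀ i, 2 ≤ i → i < M + N → i ≠ M →
    F i * F i * F (i - 1) - (Complex.exp ℏ + Complex.exp (-ℏ)) • (F i * (F (i - 1) * F i)) +
      F (i - 1) * (F i * F i) = 0
  serre_E_up : ∀ i, 1 ≤ i → i + 1 < M + N → i ≠ M →
    E i * E i * E (i + 1) - (Complex.exp ℏ + Complex.exp (-ℏ)) • (E i * (E (i + 1) * E i)) +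
      E (i + 1) * (E i * E i) = 0
  serre_F_up : ∀ i, 1 ≤ i → i + 1 < M + N → i ≠ M →
    F (i + 1) * (F i * F i) - (Complex.exp ℏ + Complex.exp (-ℏ)) • (F i * (F (i + 1) * F i)) +
      F i * F i * F (i + 1) = 0
  /-- the quartic Serre relation `⟦⟦⟦E_{M-1}, E_M⟧, E_{M+1}⟧, E_M⟧ = 0`. -/
  serre_quartic_E : 2 ≤ M → 2 ≤ N →
    ((E (M - 1) * E M - Complex.exp ℏ • (E M * E (M - 1))) * E (M + 1) -
          Complex.exp (-ℏ) •
            (E (M + 1) * (E (M - 1) * E M - Complex.exp ℏ • (E M * E (M - 1))))) * E M +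
      E M * ((E (M - 1) * E M - Complex.exp ℏ • (E M * E (M - 1))) * E (M + 1) -
          Complex.exp (-ℏ) •
            (E (M + 1) * (E (M - 1) * E M - Complex.exp ℏ • (E M * E (M - 1))))) = 0
  /-- the quartic Serre relation `⟦F_M, ⟦F_{M+1}, ⟦F_M, F_{M-1}⟧⟧⟧ = 0`. -/
  serre_quartic_F : 2 ≤ M → 2 ≤ N →
    F M * (F (M + 1) * (F M * F (M - 1) - Complex.exp (-ℏ) • (F (M - 1) * F M)) -
          Complex.exp ℏ •
            ((F M * F (M - 1) - Complex.exp (-ℏ) • (F (M - 1) * F M)) * F (M + 1))) +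
      (F (M + 1) * (F M * F (M - 1) - Complex.exp (-ℏ) • (F (M - 1) * F M)) -
          Complex.exp ℏ •
            ((F M * F (M - 1) - Complex.exp (-ℏ) • (F (M - 1) * F M)) * F (M + 1))) * F M = 0

variable {M N : ℕ} {A : Type*} [Ring A] [Algebra ℂ A]

/-- `Eaux i g` is the composite root vector `E_{i, i+1+g}`, defined by the recursion
`E_{i,i+1} = E_i`, `E_{i,j+1} = E_{ij} E_{j,j+1} - q_j E_{j,j+1} E_{ij}` with `q_j = q^{d_j}`. -/
def UqGL.Eaux (U : UqGL M N A) (i : ℕ) : ℕ → A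
  | 0 => U.E i
  | g + 1 => U.Eaux i g * U.E (i + 1 + g) -
      Complex.exp (U.ℏ * (dd M (i + 1 + g) : ℂ)) • (U.E (i + 1 + g) * U.Eaux i g)

/-- `Faux i g` is the composite root vector `F_{i, i+1+g}`, defined by the recursion
`F_{i,i+1} = F_i`, `F_{i,j+1} = F_{j,j+1} F_{ij} - q_j⁻¹ F_{ij} F_{j,j+1}`. -/
def UqGL.Faux (U : UqGL M N A) (i : ℕ) : ℕ → A
  | 0 => U.F i
  | g + 1 => U.F (i + 1 + g) * U.Faux i g -
      Complex.exp (-(U.ℏ * (dd M (i + 1 + g) : ℂ))) • (U.Faux i g * U.F (i + 1 + g))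

/-- The composite root vector `E_{ij}` for `1 ≤ i < j ≤ M + N`. -/
def UqGL.Ec (U : UqGL M N A) (i j : ℕ) : A := U.Eaux i (j - i - 1)

/-- The composite root vector `F_{ij}` for `1 ≤ i < j ≤ M + N`. -/
def UqGL.Fc (U : UqGL M N A) (i j : ℕ) : A := U.Faux i (j - i - 1)

lemma commE_single (U : UqGL M N A) (k m : ℕ) (hk : 1 ≤ k) :
    ∀ g, k + 1 < m → m + g < M + N → Commute (U.E k) (U.Eaux m g)
  | 0, h, hb => U.EE_far k m hk (by omega) h
  | g + 1, h, hb => by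
    have h1 := commE_single U k m hk g h (by omega)
    have h2 : Commute (U.E k) (U.E (m + 1 + g)) :=
      U.EE_far k (m + 1 + g) hk (by omega) (by omega)
    show Commute _ (_ * _ - _ • _)
    exact (h1.mul_right h2).sub_right ((h2.mul_right h1).smul_right _)

lemma commF_single (U : UqGL M N A) (k m : ℕ) (hk : 1 ≤ k) :
    ∀ g, k + 1 < m → m + g < M + N → Commute (U.F k) (U.Faux m g)
  | 0, h, hb => U.FF_far k m hk (by omega) h
  | g + 1, h, hb => by
    have h1 := commF_single U k m hk g h (by omega)
    have h2 : Commute (U.F k) (U.F (m + 1 + g)) :=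
      U.FF_far k (m + 1 + g) hk (by omega) (by omega)
    show Commute _ (_ * _ - _ • _)
    exact (h2.mul_right h1).sub_right ((h1.mul_right h2).smul_right _)

lemma commE_aux (U : UqGL M N A) (i m g' : ℕ) (hi : 1 ≤ i) (hb : m + g' < M + N) :
    ∀ g, i + g + 1 < m → Commute (U.Eaux i g) (U.Eaux m g')
  | 0, h => commE_single U i m hi g' (by omega) hb
  | g + 1, h => by
    have h1 := commE_aux U i m g' hi hb g (by omega)
    have h2 := commE_single U (i + 1 + g) m (by omega) g' (by omega) hb
    show Commute (_ * _ - _ • _) _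
    exact (h1.mul_left h2).sub_left ((h2.mul_left h1).smul_left _)

lemma commF_aux (U : UqGL M N A) (i m g' : ℕ) (hi : 1 ≤ i) (hb : m + g' < M + N) :
    ∀ g, i + g + 1 < m → Commute (U.Faux i g) (U.Faux m g')
  | 0, h => commF_single U i m hi g' (by omega) hb
  | g + 1, h => by
    have h1 := commF_aux U i m g' hi hb g (by omega)
    have h2 := commF_single U (i + 1 + g) m (by omega) g' (by omega) hb
    show Commute (_ * _ - _ • _) _
    exact (h2.mul_left h1).sub_left ((h1.mul_left h2).smul_left _)

/-- Proposition 4.2: for `i < j < m < n` the composite root vectors commute. -/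
theorem stmt4 (M N : ℕ) (hM : 1 ≤ M) (hN : 1 ≤ N) (hMN : M ≠ N)
    {A : Type*} [Ring A] [Algebra ℂ A] (U : UqGL M N A)
    (i j m n : ℕ) (hi : 1 ≤ i) (hij : i < j) (hjm : j < m) (hmn : m < n) (hn : n ≤ M + N) :
    U.Ec i j * U.Ec m n = U.Ec m n * U.Ec i j ∧
    U.Fc m n * U.Fc i j = U.Fc i j * U.Fc m n := by
  constructor
  · exact commE_aux U i m (n - m - 1) hi (by omega) (j - i - 1) (by omega)
  · exact (commF_aux U i m (n - m - 1) hi (by omega) (j - i - 1) (by omega)).symm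
end
end

section
/- In U_q(gl(M|N)), for any i < j < n one has E_{ij} E_{jn} − q_j E_{jn} E_{ij} = E_{in} and F_{jn} F_{ij} − q_j^{−1} F_{ij} F_{jn} = F_{in}. -/
noncomputable section

variable {M N : ℕ} {A : Type*} [Ring A] [Algebra ℂ A]

/-- Key algebraic identity for the `E` side. -/
lemma keyE {A : Type*} [Ring A] [Algebra ℂ A] (X Y e : A) (a b : ℂ) (h : X * e = e * X) :
    X * (Y * e - b • (e * Y)) - a • ((Y * e - b • (e * Y)) * X) =
    (X * Y - a • (Y * X)) * e - b • (e * (X * Y - a • (Y * X))) := by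
  simp only [mul_sub, sub_mul, smul_mul_assoc, mul_smul_comm, smul_sub, smul_smul, mul_assoc]
  rw [← mul_assoc X e Y, h, mul_assoc, ← h, mul_comm a b]
  abel

/-- Key algebraic identity for the `F` side. -/
lemma keyF {A : Type*} [Ring A] [Algebra ℂ A] (X Y e : A) (a b : ℂ) (h : X * e = e * X) :
    (e * Y - b • (Y * e)) * X - a • (X * (e * Y - b • (Y * e))) =
    e * (Y * X - a • (X * Y)) - b • ((Y * X - a • (X * Y)) * e) := by
  simp only [mul_sub, sub_mul, smul_mul_assoc, mul_smul_comm, smul_sub, smul_smul, mul_assoc]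
  rw [← h, ← mul_assoc X e Y, h, mul_assoc, mul_comm a b]
  abel

lemma Eaux_comm {M N : ℕ} {A : Type*} [Ring A] [Algebra ℂ A] (U : UqGL M N A)
    (i n : ℕ) (hi : 1 ≤ i) (hn : n < M + N) :
    ∀ g, i + g + 1 < n → U.Eaux i g * U.E n = U.E n * U.Eaux i g := by
  intro g
  induction g with
  | zero => intro h; exact U.EE_far i n hi hn (by omega)
  | succ g ih =>
    intro h
    have h1 := ih (by omega)
    have h2 := U.EE_far (i + 1 + g) n (by omega) hn (by omega)
    show (U.Eaux i g * U.E (i + 1 + g) -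
        Complex.exp (U.ℏ * (dd M (i + 1 + g) : ℂ)) • (U.E (i + 1 + g) * U.Eaux i g)) * U.E n = _
    have e1 : U.Eaux i g * U.E (i + 1 + g) * U.E n = U.E n * (U.Eaux i g * U.E (i + 1 + g)) := by
      rw [mul_assoc, h2, ← mul_assoc, h1, mul_assoc]
    have e2 : U.E (i + 1 + g) * U.Eaux i g * U.E n = U.E n * (U.E (i + 1 + g) * U.Eaux i g) := by
      rw [mul_assoc, h1, ← mul_assoc, h2, mul_assoc]
    simp only [sub_mul, mul_sub, smul_mul_assoc, mul_smul_comm, e1, e2]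
    rw [show U.Eaux i (g + 1) = U.Eaux i g * U.E (i + 1 + g) -
        Complex.exp (U.ℏ * (dd M (i + 1 + g) : ℂ)) • (U.E (i + 1 + g) * U.Eaux i g) from rfl,
      mul_sub, mul_smul_comm]

lemma Faux_comm {M N : ℕ} {A : Type*} [Ring A] [Algebra ℂ A] (U : UqGL M N A)
    (i n : ℕ) (hi : 1 ≤ i) (hn : n < M + N) :
    ∀ g, i + g + 1 < n → U.Faux i g * U.F n = U.F n * U.Faux i g := by
  intro g
  induction g with
  | zero => intro h; exact U.FF_far i n hi hn (by omega)
  | succ g ih =>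
    intro h
    have h1 := ih (by omega)
    have h2 := U.FF_far (i + 1 + g) n (by omega) hn (by omega)
    show (U.F (i + 1 + g) * U.Faux i g -
        Complex.exp (-(U.ℏ * (dd M (i + 1 + g) : ℂ))) • (U.Faux i g * U.F (i + 1 + g))) * U.F n
        = _
    have e1 : U.F (i + 1 + g) * U.Faux i g * U.F n = U.F n * (U.F (i + 1 + g) * U.Faux i g) := by
      rw [mul_assoc, h1, ← mul_assoc, h2, mul_assoc]
    have e2 : U.Faux i g * U.F (i + 1 + g) * U.F n = U.F n * (U.Faux i g * U.F (i + 1 + g)) := by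
      rw [mul_assoc, h2, ← mul_assoc, h1, mul_assoc]
    simp only [sub_mul, mul_sub, smul_mul_assoc, mul_smul_comm, e1, e2]
    rw [show U.Faux i (g + 1) = U.F (i + 1 + g) * U.Faux i g -
        Complex.exp (-(U.ℏ * (dd M (i + 1 + g) : ℂ))) • (U.Faux i g * U.F (i + 1 + g)) from rfl,
      mul_sub, mul_smul_comm]

lemma mainE {M N : ℕ} {A : Type*} [Ring A] [Algebra ℂ A] (U : UqGL M N A)
    (i j : ℕ) (hi : 1 ≤ i) (hij : i < j) :
    ∀ g, j + g + 1 ≤ M + N →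
      U.Eaux i (j - i - 1) * U.Eaux j g -
        Complex.exp (U.ℏ * (dd M j : ℂ)) • (U.Eaux j g * U.Eaux i (j - i - 1)) =
      U.Eaux i (j - i + g) := by
  intro g
  induction g with
  | zero =>
    intro _
    have h1 : j - i = (j - i - 1) + 1 := by omega
    have h2 : i + 1 + (j - i - 1) = j := by omega
    rw [h1]
    show _ = U.Eaux i (j - i - 1) * U.E (i + 1 + (j - i - 1)) -
      Complex.exp (U.ℏ * (dd M (i + 1 + (j - i - 1)) : ℂ)) •
        (U.E (i + 1 + (j - i - 1)) * U.Eaux i (j - i - 1))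
    rw [h2]
    rfl
  | succ g ih =>
    intro h
    have h1 : i + (j - i - 1) + 1 < j + 1 + g := by omega
    have hc : U.Eaux i (j - i - 1) * U.E (j + 1 + g) = U.E (j + 1 + g) * U.Eaux i (j - i - 1) :=
      Eaux_comm U i (j + 1 + g) hi (by omega) _ h1
    have hg : j - i + (g + 1) = (j - i + g) + 1 := by omega
    have h2 : i + 1 + (j - i + g) = j + 1 + g := by omega
    rw [hg]
    show U.Eaux i (j - i - 1) * (U.Eaux j g * U.E (j + 1 + g) -
        Complex.exp (U.ℏ * (dd M (j + 1 + g) : ℂ)) • (U.E (j + 1 + g) * U.Eaux j g)) -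
      Complex.exp (U.ℏ * (dd M j : ℂ)) • ((U.Eaux j g * U.E (j + 1 + g) -
        Complex.exp (U.ℏ * (dd M (j + 1 + g) : ℂ)) • (U.E (j + 1 + g) * U.Eaux j g)) *
          U.Eaux i (j - i - 1)) =
      U.Eaux i (j - i + g) * U.E (i + 1 + (j - i + g)) -
        Complex.exp (U.ℏ * (dd M (i + 1 + (j - i + g)) : ℂ)) •
          (U.E (i + 1 + (j - i + g)) * U.Eaux i (j - i + g))
    rw [keyE _ _ _ _ _ hc, ih (by omega), h2]

lemma mainF {M N : ℕ} {A : Type*} [Ring A] [Algebra ℂ A] (U : UqGL M N A)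
    (i j : ℕ) (hi : 1 ≤ i) (hij : i < j) :
    ∀ g, j + g + 1 ≤ M + N →
      U.Faux j g * U.Faux i (j - i - 1) -
        Complex.exp (-(U.ℏ * (dd M j : ℂ))) • (U.Faux i (j - i - 1) * U.Faux j g) =
      U.Faux i (j - i + g) := by
  intro g
  induction g with
  | zero =>
    intro _
    have h1 : j - i = (j - i - 1) + 1 := by omega
    have h2 : i + 1 + (j - i - 1) = j := by omega
    rw [h1]
    show _ = U.F (i + 1 + (j - i - 1)) * U.Faux i (j - i - 1) -
      Complex.exp (-(U.ℏ * (dd M (i + 1 + (j - i - 1)) : ℂ))) •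
        (U.Faux i (j - i - 1) * U.F (i + 1 + (j - i - 1)))
    rw [h2]
    rfl
  | succ g ih =>
    intro h
    have h1 : i + (j - i - 1) + 1 < j + 1 + g := by omega
    have hc : U.Faux i (j - i - 1) * U.F (j + 1 + g) = U.F (j + 1 + g) * U.Faux i (j - i - 1) :=
      Faux_comm U i (j + 1 + g) hi (by omega) _ h1
    have hg : j - i + (g + 1) = (j - i + g) + 1 := by omega
    have h2 : i + 1 + (j - i + g) = j + 1 + g := by omega
    rw [hg]
    show (U.F (j + 1 + g) * U.Faux j g -
        Complex.exp (-(U.ℏ * (dd M (j + 1 + g) : ℂ))) • (U.Faux j g * U.F (j + 1 + g))) *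
          U.Faux i (j - i - 1) -
      Complex.exp (-(U.ℏ * (dd M j : ℂ))) • (U.Faux i (j - i - 1) *
        (U.F (j + 1 + g) * U.Faux j g -
          Complex.exp (-(U.ℏ * (dd M (j + 1 + g) : ℂ))) • (U.Faux j g * U.F (j + 1 + g)))) =
      U.F (i + 1 + (j - i + g)) * U.Faux i (j - i + g) -
        Complex.exp (-(U.ℏ * (dd M (i + 1 + (j - i + g)) : ℂ))) •
          (U.Faux i (j - i + g) * U.F (i + 1 + (j - i + g)))
    rw [keyF _ _ _ _ _ hc, ih (by omega), h2]

/-- Proposition 4.3: for `i < j < n`, `E_{ij} E_{jn} - q_j E_{jn} E_{ij} = E_{in}` and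
`F_{jn} F_{ij} - q_j⁻¹ F_{ij} F_{jn} = F_{in}`. -/
theorem stmt5 (M N : ℕ) (hM : 1 ≤ M) (hN : 1 ≤ N) (hMN : M ≠ N)
    {A : Type*} [Ring A] [Algebra ℂ A] (U : UqGL M N A)
    (i j n : ℕ) (hi : 1 ≤ i) (hij : i < j) (hjn : j < n) (hn : n ≤ M + N) :
    U.Ec i j * U.Ec j n - Complex.exp (U.ℏ * (dd M j : ℂ)) • (U.Ec j n * U.Ec i j) = U.Ec i n ∧
    U.Fc j n * U.Fc i j - Complex.exp (-(U.ℏ * (dd M j : ℂ))) • (U.Fc i j * U.Fc j n) =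
      U.Fc i n := by
  have hg : n - i - 1 = j - i + (n - j - 1) := by omega
  have hb : j + (n - j - 1) + 1 ≤ M + N := by omega
  constructor
  · show U.Eaux i (j - i - 1) * U.Eaux j (n - j - 1) - _ • (U.Eaux j (n - j - 1) * _) = _
    rw [show U.Ec i n = U.Eaux i (j - i + (n - j - 1)) by rw [UqGL.Ec, hg]]
    exact mainE U i j hi hij (n - j - 1) hb
  · show U.Faux j (n - j - 1) * U.Faux i (j - i - 1) - _ • (_ * U.Faux j (n - j - 1)) = _
    rw [show U.Fc i n = U.Faux i (j - i + (n - j - 1)) by rw [UqGL.Fc, hg]]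
    exact mainF U i j hi hij (n - j - 1) hb
end
end

section
/- In U_q(gl(M|N)), if the index intervals are adjacent or disjoint (i < j = m < n, or i < j < m < n), then E_{ij} commutes with F_{mn} and E_{mn} commutes with F_{ij}: E_{ij}F_{mn} = F_{mn}E_{ij} and E_{mn}F_{ij} = F_{ij}E_{mn}. -/
noncomputable section

variable {M N : ℕ} {A : Type*} [Ring A] [Algebra ℂ A]

lemma par_even {M c : ℕ} (hc : c ≠ M) : Even (par M c + par M (c + 1)) := by
  unfold par
  split_ifs with h1 h2 h2
  · decide
  · exact absurd (by omega : c = M) hc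
  · omega
  · decide

lemma UqGL.ef_comm (U : UqGL M N A) {a b : ℕ} (ha1 : 1 ≤ a) (ha2 : a < M + N)
    (hb1 : 1 ≤ b) (hb2 : b < M + N) (hab : a ≠ b) : Commute (U.E a) (U.F b) := by
  have h := U.EF a b ha1 ha2 hb1 hb2
  rw [if_neg hab] at h
  have hev : Even ((par M a + par M (a + 1)) * (par M b + par M (b + 1))) := by
    by_cases haM : a = M
    · exact (par_even (by omega : b ≠ M)).mul_left _
    · exact (par_even haM).mul_right _
  rw [hev.neg_one_pow, one_smul, sub_eq_zero] at h
  exact h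

lemma UqGL.commute_Faux (U : UqGL M N A) (x : A) (m g : ℕ)
    (h : ∀ b, m ≤ b → b ≤ m + g → Commute x (U.F b)) : Commute x (U.Faux m g) := by
  induction g with
  | zero => exact h m le_rfl (by omega)
  | succ g ih =>
    have hx : Commute x (U.Faux m g) := ih fun b hb1 hb2 => h b hb1 (by omega)
    have hF : Commute x (U.F (m + 1 + g)) := h _ (by omega) (by omega)
    show Commute x (U.F (m + 1 + g) * U.Faux m g - _ • (U.Faux m g * U.F (m + 1 + g)))
    exact (hF.mul_right hx).sub_right ((hx.mul_right hF).smul_right _)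

lemma UqGL.commute_Eaux (U : UqGL M N A) (y : A) (i g : ℕ)
    (h : ∀ a, i ≤ a → a ≤ i + g → Commute (U.E a) y) : Commute (U.Eaux i g) y := by
  induction g with
  | zero => exact h i le_rfl (by omega)
  | succ g ih =>
    have hx : Commute (U.Eaux i g) y := ih fun a ha1 ha2 => h a ha1 (by omega)
    have hE : Commute (U.E (i + 1 + g)) y := h _ (by omega) (by omega)
    show Commute (U.Eaux i g * U.E (i + 1 + g) - _ • (U.E (i + 1 + g) * U.Eaux i g)) y
    exact (hx.mul_left hE).sub_left ((hE.mul_left hx).smul_left _)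

/-- Proposition 4.8: if the index intervals are adjacent or disjoint (`i < j ≤ m < n`), then
`E_{ij}` commutes with `F_{mn}` and `E_{mn}` commutes with `F_{ij}`. -/
theorem stmt11 (M N : ℕ) (hM : 1 ≤ M) (hN : 1 ≤ N) (hMN : M ≠ N)
    {A : Type*} [Ring A] [Algebra ℂ A] (U : UqGL M N A)
    (i j m n : ℕ) (hi : 1 ≤ i) (hij : i < j) (hjm : j ≤ m) (hmn : m < n) (hn : n ≤ M + N) :
    U.Ec i j * U.Fc m n = U.Fc m n * U.Ec i j ∧
    U.Ec m n * U.Fc i j = U.Fc i j * U.Ec m n := by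
  constructor
  · apply U.commute_Eaux
    intro a ha1 ha2
    apply (U.commute_Faux (U.E a) m (n - m - 1) ?_)
    intro b hb1 hb2
    exact U.ef_comm (by omega) (by omega) (by omega) (by omega) (by omega)
  · apply U.commute_Eaux
    intro a ha1 ha2
    apply (U.commute_Faux (U.E a) i (j - i - 1) ?_)
    intro b hb1 hb2
    exact U.ef_comm (by omega) (by omega) (by omega) (by omega) (by omega)
end
end

section
/- In U_q(gl(M|N)), for nested indices i < m < n < j: E_{ij} F_{mn} = (−1)^{([m]+[n])} F_{mn} E_{ij} and E_{mn} F_{ij} = (−1)^{([m]+[n])} F_{ij} E_{mn}. -/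
noncomputable section

variable {M N : ℕ} {A : Type*} [Ring A] [Algebra ℂ A]

section Helpers

lemma npow_mod2 (x y : ℕ) (h : x % 2 = y % 2) : ((-1:ℂ))^x = (-1)^y := by
  rw [← Nat.div_add_mod x 2, ← Nat.div_add_mod y 2, h, pow_add, pow_add, pow_mul, pow_mul]
  norm_num

lemma par01 (M x : ℕ) : par M x = 0 ∨ par M x = 1 := by unfold par; split_ifs <;> simp

lemma par_le {M x : ℕ} (h : x ≤ M) : par M x = 0 := by simp [par, h]

lemma par_gt {M x : ℕ} (h : M < x) : par M x = 1 := by simp [par, Nat.not_le.mpr h]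

lemma par_mono {M x y : ℕ} (h : x ≤ y) : par M x ≤ par M y := by
  unfold par; split_ifs with h1 h2 <;> first | rfl | omega


lemma dd_cases (M x : ℕ) : dd M x = 1 ∨ dd M x = -1 := by unfold dd; split_ifs <;> simp

variable {M N : ℕ} {A : Type*} [Ring A] [Algebra ℂ A]

lemma UqGL.q_sub_ne (U : UqGL M N A) (t : ℕ) :
    Complex.exp (U.ℏ * (dd M t : ℂ)) - Complex.exp (-(U.ℏ * (dd M t : ℂ))) ≠ 0 := by
  intro h
  have h2 : Complex.exp (U.ℏ * (dd M t : ℂ)) = Complex.exp (-(U.ℏ * (dd M t : ℂ))) :=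
    sub_eq_zero.mp h
  have h3 : Complex.exp (2 * (U.ℏ * (dd M t : ℂ))) = 1 := by
    rw [two_mul, Complex.exp_add]
    nth_rewrite 2 [h2]
    rw [← Complex.exp_add, add_neg_cancel, Complex.exp_zero]
  rcases dd_cases M t with hd | hd <;> rw [hd] at h3
  · exact U.q_ne_one (by rw [show (2:ℂ) * U.ℏ = 2 * (U.ℏ * ((1:ℤ):ℂ)) by push_cast; ring]; exact h3)
  · apply U.q_ne_one
    have : Complex.exp (2 * U.ℏ) * Complex.exp (2 * (U.ℏ * ((-1:ℤ):ℂ))) = 1 := by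
      rw [← Complex.exp_add]; push_cast; ring_nf; exact Complex.exp_zero
    rw [h3, mul_one] at this; exact this

/-- `E i * F j = sign • (F j * E i)` when `i ≠ j`. -/
lemma UqGL.EFne (U : UqGL M N A) {i j : ℕ} (h1 : 1 ≤ i) (h2 : i < M + N) (h3 : 1 ≤ j)
    (h4 : j < M + N) (h : i ≠ j) :
    U.E i * U.F j =
      ((-1 : ℂ) ^ ((par M i + par M (i + 1)) * (par M j + par M (j + 1)))) • (U.F j * U.E i) := by
  have := U.EF i j h1 h2 h3 h4
  rw [if_neg h] at this
  have := sub_eq_zero.mp this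
  exact this

end Helpers
section Machinery

variable {M N : ℕ} {A : Type*} [Ring A] [Algebra ℂ A]

/-- lift a commutation relation through a right factor -/
lemma liftL {x y w : A} {s : ℂ} (h : x * y = s • w) (z : A) : x * (y * z) = s • (w * z) := by
  rw [← mul_assoc, h, smul_mul_assoc]

lemma liftL' {x y w v : A} {s : ℂ} (h : x * y = s • w + v) (z : A) :
    x * (y * z) = s • (w * z) + v * z := by
  rw [← mul_assoc, h, add_mul, smul_mul_assoc]

lemma conjK (K X Y : A) (a b c : ℂ) (hX : K * X = a • (X * K)) (hY : K * Y = b • (Y * K)) :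
    K * (X * Y - c • (Y * X)) = (a * b) • ((X * Y - c • (Y * X)) * K) := by
  have h1 : K * (X * Y) = (a * b) • (X * Y * K) := by
    rw [← mul_assoc, hX, smul_mul_assoc, mul_assoc, hY, mul_smul_comm, smul_smul, ← mul_assoc]
  have h2 : K * (Y * X) = (a * b) • (Y * X * K) := by
    rw [← mul_assoc, hY, smul_mul_assoc, mul_assoc, hX, mul_smul_comm, smul_smul,
      ← mul_assoc, mul_comm b a]
  rw [mul_sub, h1, mul_smul_comm, h2, sub_mul, smul_mul_assoc]
  module

lemma UqGL.K_Eaux (U : UqGL M N A) (i l : ℕ) (ν : ℂ) : ∀ g,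
    U.K l ν * U.Eaux i g =
      Complex.exp (U.ℏ * ν * ((if l = i then 1 else 0) - (if l = i + 1 + g then 1 else 0))) •
        (U.Eaux i g * U.K l ν)
  | 0 => by simpa [UqGL.Eaux] using U.K_E l i ν
  | g + 1 => by
    have ih := U.K_Eaux i l ν g
    have hE := U.K_E l (i + 1 + g) ν
    show U.K l ν * (U.Eaux i g * U.E (i + 1 + g) -
        Complex.exp (U.ℏ * (dd M (i + 1 + g) : ℂ)) • (U.E (i + 1 + g) * U.Eaux i g)) = _
    rw [conjK _ _ _ _ _ _ ih hE, ← Complex.exp_add]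
    congr 2
    rw [show i + 1 + (g + 1) = (i + 1 + g) + 1 from rfl]
    ring

lemma UqGL.K_Faux (U : UqGL M N A) (i l : ℕ) (ν : ℂ) : ∀ g,
    U.K l ν * U.Faux i g =
      Complex.exp (-(U.ℏ * ν *
          ((if l = i then 1 else 0) - (if l = i + 1 + g then 1 else 0)))) •
        (U.Faux i g * U.K l ν)
  | 0 => by simpa [UqGL.Faux] using U.K_F l i ν
  | g + 1 => by
    have ih := U.K_Faux i l ν g
    have hF := U.K_F l (i + 1 + g) ν
    show U.K l ν * (U.F (i + 1 + g) * U.Faux i g -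
        Complex.exp (-(U.ℏ * (dd M (i + 1 + g) : ℂ))) • (U.Faux i g * U.F (i + 1 + g))) = _
    rw [conjK _ _ _ _ _ _ hF ih, ← Complex.exp_add]
    congr 2
    rw [show i + 1 + (g + 1) = (i + 1 + g) + 1 from rfl]
    ring

end Machinery
section FarLemmas

variable {M N : ℕ} {A : Type*} [Ring A] [Algebra ℂ A]

lemma liftC {x y : A} (h : x * y = y * x) (z : A) : x * (y * z) = y * (x * z) := by
  rw [← mul_assoc, h, mul_assoc]

/-- `E_{i,i+1+g}` commutes with `E l` for `l` beyond the top index. -/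
lemma UqGL.Eaux_E_far (U : UqGL M N A) {i : ℕ} (hi : 1 ≤ i) :
    ∀ g l, i + 1 + g < l → l < M + N → U.Eaux i g * U.E l = U.E l * U.Eaux i g
  | 0, l, h1, h2 => U.EE_far i l hi h2 (by omega)
  | g + 1, l, h1, h2 => by
    have ih := U.Eaux_E_far hi g l (by omega) h2
    have h3 := U.EE_far (i + 1 + g) l (by omega) h2 (by omega)
    show (U.Eaux i g * U.E (i + 1 + g) -
        Complex.exp (U.ℏ * (dd M (i + 1 + g) : ℂ)) • (U.E (i + 1 + g) * U.Eaux i g)) * U.E l =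
      U.E l * (U.Eaux i g * U.E (i + 1 + g) -
        Complex.exp (U.ℏ * (dd M (i + 1 + g) : ℂ)) • (U.E (i + 1 + g) * U.Eaux i g))
    simp only [sub_mul, mul_sub, smul_mul_assoc, mul_smul_comm, mul_assoc, h3, ih,
      liftC h3, liftC ih]

lemma UqGL.Faux_F_far (U : UqGL M N A) {i : ℕ} (hi : 1 ≤ i) :
    ∀ g l, i + 1 + g < l → l < M + N → U.Faux i g * U.F l = U.F l * U.Faux i g
  | 0, l, h1, h2 => U.FF_far i l hi h2 (by omega)
  | g + 1, l, h1, h2 => by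
    have ih := U.Faux_F_far hi g l (by omega) h2
    have h3 := U.FF_far (i + 1 + g) l (by omega) h2 (by omega)
    show (U.F (i + 1 + g) * U.Faux i g -
        Complex.exp (-(U.ℏ * (dd M (i + 1 + g) : ℂ))) • (U.Faux i g * U.F (i + 1 + g))) * U.F l =
      U.F l * (U.F (i + 1 + g) * U.Faux i g -
        Complex.exp (-(U.ℏ * (dd M (i + 1 + g) : ℂ))) • (U.Faux i g * U.F (i + 1 + g)))
    simp only [sub_mul, mul_sub, smul_mul_assoc, mul_smul_comm, mul_assoc, h3, ih,
      liftC h3, liftC ih]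

/-- `E_{i,i+1+g}` super-commutes with `F l` for `l` beyond the top index. -/
lemma UqGL.Eaux_F_far (U : UqGL M N A) {i : ℕ} (hi : 1 ≤ i) :
    ∀ g l, i + g < l → l < M + N →
      U.Eaux i g * U.F l =
        ((-1 : ℂ) ^ ((par M i + par M (i + 1 + g)) * (par M l + par M (l + 1)))) •
          (U.F l * U.Eaux i g)
  | 0, l, h1, h2 => by
    simpa [UqGL.Eaux] using U.EFne hi (by omega) (by omega) h2 (by omega)
  | g + 1, l, h1, h2 => by
    have ih := U.Eaux_F_far hi g l (by omega) h2
    have hE := U.EFne (i := i + 1 + g) (j := l) (by omega) (by omega) (by omega) h2 (by omega)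
    have hsign : ((-1 : ℂ) ^ ((par M i + par M (i + 1 + g)) * (par M l + par M (l + 1)))) *
        ((-1 : ℂ) ^ ((par M (i + 1 + g) + par M (i + 1 + g + 1)) * (par M l + par M (l + 1)))) =
        ((-1 : ℂ) ^ ((par M i + par M (i + 1 + (g + 1))) * (par M l + par M (l + 1)))) := by
      rw [← pow_add, show i + 1 + (g + 1) = i + 1 + g + 1 from rfl]
      apply npow_mod2
      rcases par01 M i with h3 | h3 <;> rcases par01 M (i + 1 + g) with h4 | h4 <;>
        rcases par01 M (i + 1 + g + 1) with h5 | h5 <;> simp only [h3, h4, h5] <;> omega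
    show (U.Eaux i g * U.E (i + 1 + g) -
        Complex.exp (U.ℏ * (dd M (i + 1 + g) : ℂ)) • (U.E (i + 1 + g) * U.Eaux i g)) * U.F l =
      ((-1 : ℂ) ^ ((par M i + par M (i + 1 + (g + 1))) * (par M l + par M (l + 1)))) •
      (U.F l * (U.Eaux i g * U.E (i + 1 + g) -
        Complex.exp (U.ℏ * (dd M (i + 1 + g) : ℂ)) • (U.E (i + 1 + g) * U.Eaux i g)))
    simp only [sub_mul, mul_sub, smul_mul_assoc, mul_smul_comm, mul_assoc, smul_sub,
      smul_smul, hE, ih, liftL hE, liftL ih]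
    match_scalars <;> (rw [← hsign]; ring)

end FarLemmas
section TopLemmas

variable {M N : ℕ} {A : Type*} [Ring A] [Algebra ℂ A]

/-- `E l` super-commutes with `F_{i,i+1+g}` for `l` beyond the top index. -/
lemma UqGL.E_Faux_far (U : UqGL M N A) {i : ℕ} (hi : 1 ≤ i) :
    ∀ g l, i + g < l → l < M + N →
      U.E l * U.Faux i g =
        ((-1 : ℂ) ^ ((par M i + par M (i + 1 + g)) * (par M l + par M (l + 1)))) •
          (U.Faux i g * U.E l)
  | 0, l, h1, h2 => by
    have h := U.EFne (i := l) (j := i) (by omega) h2 hi (by omega) (by omega)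
    have hsign : ((-1 : ℂ) ^ ((par M l + par M (l + 1)) * (par M i + par M (i + 1)))) =
        ((-1 : ℂ) ^ ((par M i + par M (i + 1 + 0)) * (par M l + par M (l + 1)))) := by
      apply npow_mod2
      rw [show i + 1 + 0 = i + 1 from rfl, Nat.mul_comm]
    rw [show U.Faux i 0 = U.F i from rfl, h, hsign]
  | g + 1, l, h1, h2 => by
    have ih := U.E_Faux_far hi g l (by omega) h2
    have hF := U.EFne (i := l) (j := i + 1 + g) (by omega) h2 (by omega) (by omega) (by omega)
    have hsign : ((-1 : ℂ) ^ ((par M i + par M (i + 1 + g)) * (par M l + par M (l + 1)))) *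
        ((-1 : ℂ) ^ ((par M l + par M (l + 1)) * (par M (i + 1 + g) + par M (i + 1 + g + 1)))) =
        ((-1 : ℂ) ^ ((par M i + par M (i + 1 + (g + 1))) * (par M l + par M (l + 1)))) := by
      rw [← pow_add, show i + 1 + (g + 1) = i + 1 + g + 1 from rfl]
      apply npow_mod2
      rcases par01 M i with h3 | h3 <;> rcases par01 M (i + 1 + g) with h4 | h4 <;>
        rcases par01 M (i + 1 + g + 1) with h5 | h5 <;> simp only [h3, h4, h5] <;> omega
    show U.E l * (U.F (i + 1 + g) * U.Faux i g -
        Complex.exp (-(U.ℏ * (dd M (i + 1 + g) : ℂ))) • (U.Faux i g * U.F (i + 1 + g))) =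
      ((-1 : ℂ) ^ ((par M i + par M (i + 1 + (g + 1))) * (par M l + par M (l + 1)))) •
      ((U.F (i + 1 + g) * U.Faux i g -
        Complex.exp (-(U.ℏ * (dd M (i + 1 + g) : ℂ))) • (U.Faux i g * U.F (i + 1 + g))) * U.E l)
    simp only [mul_sub, sub_mul, mul_smul_comm, smul_mul_assoc, mul_assoc, smul_smul,
      smul_sub, hF, ih, liftL hF, liftL ih]
    match_scalars <;> (rw [← hsign]; ring)

end TopLemmas
section LemC

variable {M N : ℕ} {A : Type*} [Ring A] [Algebra ℂ A]

lemma neg_one_pow_even' {e : ℕ} (he : e % 2 = 0) : ((-1 : ℂ)) ^ e = 1 := by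
  rw [npow_mod2 e 0 he, pow_zero]

lemma UqGL.EFeq (U : UqGL M N A) {t : ℕ} (h1 : 1 ≤ t) (h2 : t < M + N) :
    U.E t * U.F t = ((-1 : ℂ) ^ (par M t + par M (t + 1))) • (U.F t * U.E t) +
      (Complex.exp (U.ℏ * (dd M t : ℂ)) - Complex.exp (-(U.ℏ * (dd M t : ℂ))))⁻¹ •
        (U.K t (dd M t : ℂ) * U.K (t + 1) (-(dd M (t + 1) : ℂ)) -
          U.K t (-(dd M t : ℂ)) * U.K (t + 1) (dd M (t + 1) : ℂ)) := by
  have h := U.EF t t h1 h2 h1 h2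
  rw [if_pos rfl] at h
  have hp : ((-1 : ℂ)) ^ ((par M t + par M (t + 1)) * (par M t + par M (t + 1))) =
      (-1 : ℂ) ^ (par M t + par M (t + 1)) := by
    apply npow_mod2
    rcases par01 M t with h3 | h3 <;> rcases par01 M (t + 1) with h4 | h4 <;>
      simp only [h3, h4] <;> omega
  rw [hp] at h
  rw [sub_eq_iff_eq_add.mp h, add_comm]

/-- Lemma C : `⟦E_{i,t+1}, F_t⟧ = q_t E_{i,t} K_t^{-d_t} K_{t+1}^{d_{t+1}}` for `t = i+1+g`. -/
lemma UqGL.Eaux_F_top (U : UqGL M N A) {i g : ℕ} (hi : 1 ≤ i) (ht : i + 1 + g < M + N) :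
    U.Eaux i (g + 1) * U.F (i + 1 + g) =
      ((-1 : ℂ) ^ (par M (i + 1 + g) + par M (i + 1 + g + 1))) •
        (U.F (i + 1 + g) * U.Eaux i (g + 1)) +
      Complex.exp (U.ℏ * (dd M (i + 1 + g) : ℂ)) •
        (U.Eaux i g * (U.K (i + 1 + g) (-(dd M (i + 1 + g) : ℂ)) *
          U.K (i + 1 + g + 1) (dd M (i + 1 + g + 1) : ℂ))) := by
  have m1 : par M i ≤ par M (i + 1 + g) := par_mono (by omega)
  have m2 : par M (i + 1 + g) ≤ par M (i + 1 + g + 1) := par_mono (by omega)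
  have hEF := U.EFeq (t := i + 1 + g) (by omega) ht
  have hXF : U.Eaux i g * U.F (i + 1 + g) = U.F (i + 1 + g) * U.Eaux i g := by
    have hs : ((-1 : ℂ) ^ ((par M i + par M (i + 1 + g)) *
        (par M (i + 1 + g) + par M (i + 1 + g + 1)))) = 1 :=
      neg_one_pow_even' (by
        rcases par01 M i with h3 | h3 <;> rcases par01 M (i + 1 + g) with h4 | h4 <;>
          rcases par01 M (i + 1 + g + 1) with h5 | h5 <;>
          simp only [h3, h4, h5] at m1 m2 ⊢ <;> omega)
    rw [U.Eaux_F_far hi g (i + 1 + g) (by omega) ht, hs, one_smul]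
  have hKtX : ∀ ν : ℂ, U.K (i + 1 + g) ν * U.Eaux i g =
      Complex.exp (-(U.ℏ * ν)) • (U.Eaux i g * U.K (i + 1 + g) ν) := by
    intro ν
    have h := U.K_Eaux i (i + 1 + g) ν g
    rw [if_neg (by omega), if_pos rfl] at h
    rw [h, show U.ℏ * ν * ((0 : ℂ) - 1) = -(U.ℏ * ν) by ring]
  have hKt1X : ∀ ν : ℂ, U.K (i + 1 + g + 1) ν * U.Eaux i g =
      U.Eaux i g * U.K (i + 1 + g + 1) ν := by
    intro ν
    have h := U.K_Eaux i (i + 1 + g + 1) ν g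
    rw [if_neg (by omega), if_neg (by omega)] at h
    rw [h, show U.ℏ * ν * ((0 : ℂ) - 0) = 0 by ring, Complex.exp_zero, one_smul]
  have hT1X : (U.K (i + 1 + g) (dd M (i + 1 + g) : ℂ) *
        U.K (i + 1 + g + 1) (-(dd M (i + 1 + g + 1) : ℂ))) * U.Eaux i g =
      Complex.exp (-(U.ℏ * (dd M (i + 1 + g) : ℂ))) • (U.Eaux i g *
        (U.K (i + 1 + g) (dd M (i + 1 + g) : ℂ) *
          U.K (i + 1 + g + 1) (-(dd M (i + 1 + g + 1) : ℂ)))) := by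
    rw [mul_assoc, hKt1X _, ← mul_assoc, hKtX _, smul_mul_assoc, mul_assoc]
  have hT2X : (U.K (i + 1 + g) (-(dd M (i + 1 + g) : ℂ)) *
        U.K (i + 1 + g + 1) (dd M (i + 1 + g + 1) : ℂ)) * U.Eaux i g =
      Complex.exp (U.ℏ * (dd M (i + 1 + g) : ℂ)) • (U.Eaux i g *
        (U.K (i + 1 + g) (-(dd M (i + 1 + g) : ℂ)) *
          U.K (i + 1 + g + 1) (dd M (i + 1 + g + 1) : ℂ))) := by
    rw [mul_assoc, hKt1X _, ← mul_assoc, hKtX _, smul_mul_assoc, mul_assoc,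
      show Complex.exp (-(U.ℏ * -(dd M (i + 1 + g) : ℂ))) =
        Complex.exp (U.ℏ * (dd M (i + 1 + g) : ℂ)) by ring_nf]
  have hq : Complex.exp (U.ℏ * (dd M (i + 1 + g) : ℂ)) *
      Complex.exp (-(U.ℏ * (dd M (i + 1 + g) : ℂ))) = 1 := by
    rw [← Complex.exp_add]; simp
  have hc : (Complex.exp (U.ℏ * (dd M (i + 1 + g) : ℂ)) -
        Complex.exp (-(U.ℏ * (dd M (i + 1 + g) : ℂ))))⁻¹ *
      (Complex.exp (U.ℏ * (dd M (i + 1 + g) : ℂ)) *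
        Complex.exp (U.ℏ * (dd M (i + 1 + g) : ℂ)) - 1) =
      Complex.exp (U.ℏ * (dd M (i + 1 + g) : ℂ)) := by
    rw [inv_mul_eq_div, div_eq_iff (U.q_sub_ne (i + 1 + g))]
    rw [mul_sub, ← Complex.exp_add, ← Complex.exp_add]
    simp
  show (U.Eaux i g * U.E (i + 1 + g) -
      Complex.exp (U.ℏ * (dd M (i + 1 + g) : ℂ)) • (U.E (i + 1 + g) * U.Eaux i g)) *
        U.F (i + 1 + g) =
      ((-1 : ℂ) ^ (par M (i + 1 + g) + par M (i + 1 + g + 1))) •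
        (U.F (i + 1 + g) * (U.Eaux i g * U.E (i + 1 + g) -
          Complex.exp (U.ℏ * (dd M (i + 1 + g) : ℂ)) • (U.E (i + 1 + g) * U.Eaux i g))) +
      Complex.exp (U.ℏ * (dd M (i + 1 + g) : ℂ)) •
        (U.Eaux i g * (U.K (i + 1 + g) (-(dd M (i + 1 + g) : ℂ)) *
          U.K (i + 1 + g + 1) (dd M (i + 1 + g + 1) : ℂ)))
  simp only [sub_mul, smul_mul_assoc, mul_assoc, mul_sub, mul_add, smul_sub, smul_add,
    mul_smul_comm, smul_smul, hEF, hXF, liftC hXF, liftL' hEF, hT1X, hT2X,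
    liftL hT1X, liftL hT2X]
  match_scalars
  all_goals try ring
  all_goals rw [show 1 + i + g = i + 1 + g by omega]
  · rw [hq, one_mul, neg_add_cancel]
  · field_simp [U.q_sub_ne (i + 1 + g)]
    rw [mul_sub]
    nth_rewrite 2 [← Complex.exp_add]
    rw [add_neg_cancel, Complex.exp_zero, ← sq]
end LemC
section LemCp

variable {M N : ℕ} {A : Type*} [Ring A] [Algebra ℂ A]

/-- Lemma C' : `⟦E_t, F_{i,t+1}⟧ = F_{i,t} K_t^{d_t} K_{t+1}^{-d_{t+1}}` for `t = i+1+g`. -/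
lemma UqGL.E_Faux_top (U : UqGL M N A) {i g : ℕ} (hi : 1 ≤ i) (ht : i + 1 + g < M + N) :
    U.E (i + 1 + g) * U.Faux i (g + 1) =
      ((-1 : ℂ) ^ (par M (i + 1 + g) + par M (i + 1 + g + 1))) •
        (U.Faux i (g + 1) * U.E (i + 1 + g)) +
      U.Faux i g * (U.K (i + 1 + g) (dd M (i + 1 + g) : ℂ) *
        U.K (i + 1 + g + 1) (-(dd M (i + 1 + g + 1) : ℂ))) := by
  have m1 : par M i ≤ par M (i + 1 + g) := par_mono (by omega)
  have m2 : par M (i + 1 + g) ≤ par M (i + 1 + g + 1) := par_mono (by omega)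
  have hEF := U.EFeq (t := i + 1 + g) (by omega) ht
  have hEY : U.E (i + 1 + g) * U.Faux i g = U.Faux i g * U.E (i + 1 + g) := by
    have hs : ((-1 : ℂ) ^ ((par M i + par M (i + 1 + g)) *
        (par M (i + 1 + g) + par M (i + 1 + g + 1)))) = 1 :=
      neg_one_pow_even' (by
        rcases par01 M i with h3 | h3 <;> rcases par01 M (i + 1 + g) with h4 | h4 <;>
          rcases par01 M (i + 1 + g + 1) with h5 | h5 <;>
          simp only [h3, h4, h5] at m1 m2 ⊢ <;> omega)
    rw [U.E_Faux_far hi g (i + 1 + g) (by omega) ht, hs, one_smul]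
  have hKtY : ∀ ν : ℂ, U.K (i + 1 + g) ν * U.Faux i g =
      Complex.exp (U.ℏ * ν) • (U.Faux i g * U.K (i + 1 + g) ν) := by
    intro ν
    have h := U.K_Faux i (i + 1 + g) ν g
    rw [if_neg (by omega), if_pos rfl] at h
    rw [h, show -(U.ℏ * ν * ((0 : ℂ) - 1)) = U.ℏ * ν by ring]
  have hKt1Y : ∀ ν : ℂ, U.K (i + 1 + g + 1) ν * U.Faux i g =
      U.Faux i g * U.K (i + 1 + g + 1) ν := by
    intro ν
    have h := U.K_Faux i (i + 1 + g + 1) ν g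
    rw [if_neg (by omega), if_neg (by omega)] at h
    rw [h, show -(U.ℏ * ν * ((0 : ℂ) - 0)) = 0 by ring, Complex.exp_zero, one_smul]
  have hT1Y : (U.K (i + 1 + g) (dd M (i + 1 + g) : ℂ) *
        U.K (i + 1 + g + 1) (-(dd M (i + 1 + g + 1) : ℂ))) * U.Faux i g =
      Complex.exp (U.ℏ * (dd M (i + 1 + g) : ℂ)) • (U.Faux i g *
        (U.K (i + 1 + g) (dd M (i + 1 + g) : ℂ) *
          U.K (i + 1 + g + 1) (-(dd M (i + 1 + g + 1) : ℂ)))) := by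
    rw [mul_assoc, hKt1Y _, ← mul_assoc, hKtY _, smul_mul_assoc, mul_assoc]
  have hT2Y : (U.K (i + 1 + g) (-(dd M (i + 1 + g) : ℂ)) *
        U.K (i + 1 + g + 1) (dd M (i + 1 + g + 1) : ℂ)) * U.Faux i g =
      Complex.exp (-(U.ℏ * (dd M (i + 1 + g) : ℂ))) • (U.Faux i g *
        (U.K (i + 1 + g) (-(dd M (i + 1 + g) : ℂ)) *
          U.K (i + 1 + g + 1) (dd M (i + 1 + g + 1) : ℂ))) := by
    rw [mul_assoc, hKt1Y _, ← mul_assoc, hKtY _, smul_mul_assoc, mul_assoc,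
      show U.ℏ * -(dd M (i + 1 + g) : ℂ) = -(U.ℏ * (dd M (i + 1 + g) : ℂ)) by ring]
  show U.E (i + 1 + g) * (U.F (i + 1 + g) * U.Faux i g -
      Complex.exp (-(U.ℏ * (dd M (i + 1 + g) : ℂ))) • (U.Faux i g * U.F (i + 1 + g))) =
    ((-1 : ℂ) ^ (par M (i + 1 + g) + par M (i + 1 + g + 1))) •
      ((U.F (i + 1 + g) * U.Faux i g -
        Complex.exp (-(U.ℏ * (dd M (i + 1 + g) : ℂ))) • (U.Faux i g * U.F (i + 1 + g))) *
          U.E (i + 1 + g)) +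
    U.Faux i g * (U.K (i + 1 + g) (dd M (i + 1 + g) : ℂ) *
      U.K (i + 1 + g + 1) (-(dd M (i + 1 + g + 1) : ℂ)))
  simp only [sub_mul, smul_mul_assoc, mul_assoc, mul_sub, mul_add, smul_sub, smul_add,
    mul_smul_comm, smul_smul, hEF, hEY, liftC hEY, liftL' hEF, hT1Y, hT2Y,
    liftL hT1Y, liftL hT2Y]
  match_scalars
  all_goals try ring
  all_goals (try rw [show 1 + i + g = i + 1 + g by omega])
  rw [← sub_mul, mul_inv_cancel₀ (U.q_sub_ne (i + 1 + g))]

end LemCp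
section LemA

variable {M N : ℕ} {A : Type*} [Ring A] [Algebra ℂ A]

/-- `E_{i,i+1+g}` super-commutes with `F k` for `i < k < i+g`. -/
lemma UqGL.Eaux_F_mid (U : UqGL M N A) {i : ℕ} (hi : 1 ≤ i) :
    ∀ g, i + 1 + g ≤ M + N → ∀ k, i < k → k < i + g →
      U.Eaux i g * U.F k =
        ((-1 : ℂ) ^ ((par M i + par M (i + 1 + g)) * (par M k + par M (k + 1)))) •
          (U.F k * U.Eaux i g)
  | 0, _, k, hik, hk => absurd hk (by omega)
  | g + 1, hb, k, hik, hk => by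
    rcases Nat.lt_or_ge k (i + g) with hlt | hge
    · -- easy case: k below the top index
      have ih := U.Eaux_F_mid hi g (by omega) k hik hlt
      have hE := U.EFne (i := i + 1 + g) (j := k) (by omega) (by omega) (by omega)
        (by omega) (by omega)
      have hsign : ((-1 : ℂ) ^ ((par M i + par M (i + 1 + g)) * (par M k + par M (k + 1)))) *
          ((-1 : ℂ) ^ ((par M (i + 1 + g) + par M (i + 1 + g + 1)) *
            (par M k + par M (k + 1)))) =
          ((-1 : ℂ) ^ ((par M i + par M (i + 1 + (g + 1))) * (par M k + par M (k + 1)))) := by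
        rw [← pow_add, show i + 1 + (g + 1) = i + 1 + g + 1 from rfl]
        apply npow_mod2
        rcases par01 M i with h3 | h3 <;> rcases par01 M (i + 1 + g) with h4 | h4 <;>
          rcases par01 M (i + 1 + g + 1) with h5 | h5 <;> simp only [h3, h4, h5] <;> omega
      show (U.Eaux i g * U.E (i + 1 + g) -
          Complex.exp (U.ℏ * (dd M (i + 1 + g) : ℂ)) • (U.E (i + 1 + g) * U.Eaux i g)) *
            U.F k =
        ((-1 : ℂ) ^ ((par M i + par M (i + 1 + (g + 1))) * (par M k + par M (k + 1)))) •
          (U.F k * (U.Eaux i g * U.E (i + 1 + g) -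
            Complex.exp (U.ℏ * (dd M (i + 1 + g) : ℂ)) • (U.E (i + 1 + g) * U.Eaux i g)))
      simp only [sub_mul, mul_sub, smul_mul_assoc, mul_smul_comm, mul_assoc, smul_sub,
        smul_smul, hE, ih, liftL hE, liftL ih]
      match_scalars <;> (rw [← hsign]; ring)
    · -- hard case: k = i + g, the top index of `Eaux i g`
      have hkeq : k = i + g := by omega
      rcases g with _ | g'
      · omega
      · -- g = g' + 1, k = i + g' + 1
        have hC := U.Eaux_F_top (i := i) (g := g') hi (by omega)
        rw [show i + 1 + g' = k by omega] at hC
        have hσ : ((-1 : ℂ) ^ ((par M (k + 1) + par M (k + 1 + 1)) *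
            (par M k + par M (k + 1)))) = 1 := by
          have m2 : par M k ≤ par M (k + 1) := par_mono (by omega)
          have m3 : par M (k + 1) ≤ par M (k + 1 + 1) := par_mono (by omega)
          apply neg_one_pow_even'
          rcases par01 M k with h3 | h3 <;> rcases par01 M (k + 1) with h4 | h4 <;>
            rcases par01 M (k + 1 + 1) with h5 | h5 <;>
            simp only [h3, h4, h5] at m2 m3 ⊢ <;> omega
        have hE : U.E (k + 1) * U.F k = U.F k * U.E (k + 1) := by
          rw [U.EFne (i := k + 1) (j := k) (by omega) (by omega) (by omega) (by omega)
            (by omega), hσ, one_smul]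
        have hXE : U.Eaux i g' * U.E (k + 1) = U.E (k + 1) * U.Eaux i g' :=
          U.Eaux_E_far hi g' (k + 1) (by omega) (by omega)
        have hKa : ∀ ν : ℂ, U.K k ν * U.E (k + 1) = U.E (k + 1) * U.K k ν := by
          intro ν
          have h := U.K_E k (k + 1) ν
          rw [if_neg (by omega), if_neg (by omega)] at h
          rw [h, show U.ℏ * ν * ((0 : ℂ) - 0) = 0 by ring, Complex.exp_zero, one_smul]
        have hKb : ∀ ν : ℂ, U.K (k + 1) ν * U.E (k + 1) =
            Complex.exp (U.ℏ * ν) • (U.E (k + 1) * U.K (k + 1) ν) := by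
          intro ν
          have h := U.K_E (k + 1) (k + 1) ν
          rw [if_pos rfl, if_neg (by omega)] at h
          rw [h, show U.ℏ * ν * ((1 : ℂ) - 0) = U.ℏ * ν by ring]
        have hT2E : (U.K k (-(dd M k : ℂ)) * U.K (k + 1) (dd M (k + 1) : ℂ)) * U.E (k + 1) =
            Complex.exp (U.ℏ * (dd M (k + 1) : ℂ)) • (U.E (k + 1) *
              (U.K k (-(dd M k : ℂ)) * U.K (k + 1) (dd M (k + 1) : ℂ))) := by
          rw [mul_assoc, hKb _, mul_smul_comm, ← mul_assoc, hKa _, mul_assoc]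
        have hsign : ((-1 : ℂ) ^ ((par M i + par M (i + 1 + (g' + 1 + 1))) *
            (par M k + par M (k + 1)))) = ((-1 : ℂ) ^ (par M k + par M (k + 1))) := by
          have m1 : par M i ≤ par M k := par_mono (by omega)
          have m2 : par M k ≤ par M (k + 1) := par_mono (by omega)
          have m3 : par M (k + 1) ≤ par M (i + 1 + (g' + 1 + 1)) := par_mono (by omega)
          apply npow_mod2
          rcases par01 M i with h3 | h3 <;> rcases par01 M k with h4 | h4 <;>
            rcases par01 M (k + 1) with h5 | h5 <;>
            rcases par01 M (i + 1 + (g' + 1 + 1)) with h6 | h6 <;>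
            simp only [h3, h4, h5, h6] at m1 m2 m3 ⊢ <;> omega
      -- goal
        show (U.Eaux i (g' + 1) * U.E (i + 1 + (g' + 1)) -
            Complex.exp (U.ℏ * (dd M (i + 1 + (g' + 1)) : ℂ)) •
              (U.E (i + 1 + (g' + 1)) * U.Eaux i (g' + 1))) * U.F k =
          ((-1 : ℂ) ^ ((par M i + par M (i + 1 + (g' + 1 + 1))) *
            (par M k + par M (k + 1)))) •
          (U.F k * (U.Eaux i (g' + 1) * U.E (i + 1 + (g' + 1)) -
            Complex.exp (U.ℏ * (dd M (i + 1 + (g' + 1)) : ℂ)) •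
              (U.E (i + 1 + (g' + 1)) * U.Eaux i (g' + 1))))
        rw [hsign, show i + 1 + (g' + 1) = k + 1 by omega]
        simp only [sub_mul, mul_sub, mul_add, smul_mul_assoc, mul_smul_comm, mul_assoc,
          smul_sub, smul_add, smul_smul, hE, liftC hE, hC, liftL' hC, hXE, liftC hXE,
          hT2E, liftL hT2E]
        match_scalars <;> ring

end LemA
section LemAp

variable {M N : ℕ} {A : Type*} [Ring A] [Algebra ℂ A]

/-- `E k` super-commutes with `F_{i,i+1+g}` for `i < k < i+g`. -/
lemma UqGL.E_Faux_mid (U : UqGL M N A) {i : ℕ} (hi : 1 ≤ i) :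
    ∀ g, i + 1 + g ≤ M + N → ∀ k, i < k → k < i + g →
      U.E k * U.Faux i g =
        ((-1 : ℂ) ^ ((par M i + par M (i + 1 + g)) * (par M k + par M (k + 1)))) •
          (U.Faux i g * U.E k)
  | 0, _, k, hik, hk => absurd hk (by omega)
  | g + 1, hb, k, hik, hk => by
    rcases Nat.lt_or_ge k (i + g) with hlt | hge
    · -- easy case
      have ih := U.E_Faux_mid hi g (by omega) k hik hlt
      have hF := U.EFne (i := k) (j := i + 1 + g) (by omega) (by omega) (by omega)
        (by omega) (by omega)
      have hsign : ((-1 : ℂ) ^ ((par M i + par M (i + 1 + g)) * (par M k + par M (k + 1)))) *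
          ((-1 : ℂ) ^ ((par M k + par M (k + 1)) *
            (par M (i + 1 + g) + par M (i + 1 + g + 1)))) =
          ((-1 : ℂ) ^ ((par M i + par M (i + 1 + (g + 1))) * (par M k + par M (k + 1)))) := by
        rw [← pow_add, show i + 1 + (g + 1) = i + 1 + g + 1 from rfl]
        apply npow_mod2
        rcases par01 M i with h3 | h3 <;> rcases par01 M (i + 1 + g) with h4 | h4 <;>
          rcases par01 M (i + 1 + g + 1) with h5 | h5 <;>
          rcases par01 M k with h6 | h6 <;> rcases par01 M (k + 1) with h7 | h7 <;>
          simp only [h3, h4, h5, h6, h7] <;> omega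
      show U.E k * (U.F (i + 1 + g) * U.Faux i g -
          Complex.exp (-(U.ℏ * (dd M (i + 1 + g) : ℂ))) • (U.Faux i g * U.F (i + 1 + g))) =
        ((-1 : ℂ) ^ ((par M i + par M (i + 1 + (g + 1))) * (par M k + par M (k + 1)))) •
          ((U.F (i + 1 + g) * U.Faux i g -
            Complex.exp (-(U.ℏ * (dd M (i + 1 + g) : ℂ))) •
              (U.Faux i g * U.F (i + 1 + g))) * U.E k)
      simp only [sub_mul, mul_sub, smul_mul_assoc, mul_smul_comm, mul_assoc, smul_sub,
        smul_smul, hF, ih, liftL hF, liftL ih]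
      match_scalars <;> (rw [← hsign]; ring)
    · -- hard case: k = i + g
      have hkeq : k = i + g := by omega
      rcases g with _ | g'
      · omega
      · have hC := U.E_Faux_top (i := i) (g := g') hi (by omega)
        rw [show i + 1 + g' = k by omega] at hC
        have hσ : ((-1 : ℂ) ^ ((par M k + par M (k + 1)) *
            (par M (k + 1) + par M (k + 1 + 1)))) = 1 := by
          have m2 : par M k ≤ par M (k + 1) := par_mono (by omega)
          have m3 : par M (k + 1) ≤ par M (k + 1 + 1) := par_mono (by omega)
          apply neg_one_pow_even'
          rcases par01 M k with h3 | h3 <;> rcases par01 M (k + 1) with h4 | h4 <;>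
            rcases par01 M (k + 1 + 1) with h5 | h5 <;>
            simp only [h3, h4, h5] at m2 m3 ⊢ <;> omega
        have hE : U.E k * U.F (k + 1) = U.F (k + 1) * U.E k := by
          rw [U.EFne (i := k) (j := k + 1) (by omega) (by omega) (by omega) (by omega)
            (by omega), hσ, one_smul]
        have hXF : U.Faux i g' * U.F (k + 1) = U.F (k + 1) * U.Faux i g' :=
          U.Faux_F_far hi g' (k + 1) (by omega) (by omega)
        have hKa : ∀ ν : ℂ, U.K k ν * U.F (k + 1) = U.F (k + 1) * U.K k ν := by
          intro ν
          have h := U.K_F k (k + 1) ν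
          rw [if_neg (by omega), if_neg (by omega)] at h
          rw [h, show -(U.ℏ * ν * ((0 : ℂ) - 0)) = 0 by ring, Complex.exp_zero, one_smul]
        have hKb : ∀ ν : ℂ, U.K (k + 1) ν * U.F (k + 1) =
            Complex.exp (-(U.ℏ * ν)) • (U.F (k + 1) * U.K (k + 1) ν) := by
          intro ν
          have h := U.K_F (k + 1) (k + 1) ν
          rw [if_pos rfl, if_neg (by omega)] at h
          rw [h, show -(U.ℏ * ν * ((1 : ℂ) - 0)) = -(U.ℏ * ν) by ring]
        have hT1F : (U.K k (dd M k : ℂ) * U.K (k + 1) (-(dd M (k + 1) : ℂ))) * U.F (k + 1) =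
            Complex.exp (U.ℏ * (dd M (k + 1) : ℂ)) • (U.F (k + 1) *
              (U.K k (dd M k : ℂ) * U.K (k + 1) (-(dd M (k + 1) : ℂ)))) := by
          rw [mul_assoc, hKb _, mul_smul_comm, ← mul_assoc, hKa _, mul_assoc,
            show -(U.ℏ * -(dd M (k + 1) : ℂ)) = U.ℏ * (dd M (k + 1) : ℂ) by ring]
        have hsign : ((-1 : ℂ) ^ ((par M i + par M (i + 1 + (g' + 1 + 1))) *
            (par M k + par M (k + 1)))) = ((-1 : ℂ) ^ (par M k + par M (k + 1))) := by
          have m1 : par M i ≤ par M k := par_mono (by omega)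
          have m2 : par M k ≤ par M (k + 1) := par_mono (by omega)
          have m3 : par M (k + 1) ≤ par M (i + 1 + (g' + 1 + 1)) := par_mono (by omega)
          apply npow_mod2
          rcases par01 M i with h3 | h3 <;> rcases par01 M k with h4 | h4 <;>
            rcases par01 M (k + 1) with h5 | h5 <;>
            rcases par01 M (i + 1 + (g' + 1 + 1)) with h6 | h6 <;>
            simp only [h3, h4, h5, h6] at m1 m2 m3 ⊢ <;> omega
        show U.E k * (U.F (i + 1 + (g' + 1)) * U.Faux i (g' + 1) -
            Complex.exp (-(U.ℏ * (dd M (i + 1 + (g' + 1)) : ℂ))) •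
              (U.Faux i (g' + 1) * U.F (i + 1 + (g' + 1)))) =
          ((-1 : ℂ) ^ ((par M i + par M (i + 1 + (g' + 1 + 1))) *
            (par M k + par M (k + 1)))) •
          ((U.F (i + 1 + (g' + 1)) * U.Faux i (g' + 1) -
            Complex.exp (-(U.ℏ * (dd M (i + 1 + (g' + 1)) : ℂ))) •
              (U.Faux i (g' + 1) * U.F (i + 1 + (g' + 1)))) * U.E k)
        rw [hsign, show i + 1 + (g' + 1) = k + 1 by omega]
        simp only [sub_mul, mul_sub, mul_add, smul_mul_assoc, mul_smul_comm, mul_assoc,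
          smul_sub, smul_add, smul_smul, hE, liftC hE, hC, liftL' hC, hXF, liftC hXF,
          hT1F, liftL hT1F]
        match_scalars
        all_goals try ring
        rw [← Complex.exp_add, neg_add_cancel, Complex.exp_zero, sub_self]

end LemAp
section Assembly

variable {M N : ℕ} {A : Type*} [Ring A] [Algebra ℂ A]

lemma UqGL.Ec_Faux (U : UqGL M N A) {i j m : ℕ} (hi : 1 ≤ i) (hj : j ≤ M + N) (him : i < m) :
    ∀ g, m + 1 + g < j →
      U.Ec i j * U.Faux m g =
        ((-1 : ℂ) ^ ((par M i + par M j) * (par M m + par M (m + 1 + g)))) •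
          (U.Faux m g * U.Ec i j)
  | 0, hg => by
    have h := U.Eaux_F_mid hi (j - i - 1) (by omega) m him (by omega)
    rw [show i + 1 + (j - i - 1) = j by omega] at h
    show U.Eaux i (j - i - 1) * U.F m = _
    rw [h, show m + 1 + 0 = m + 1 from rfl]
    rfl
  | g + 1, hg => by
    have ih := U.Ec_Faux hi hj him g (by omega)
    have h2 := U.Eaux_F_mid hi (j - i - 1) (by omega) (m + 1 + g) (by omega) (by omega)
    rw [show i + 1 + (j - i - 1) = j by omega] at h2
    have h2' : U.Ec i j * U.F (m + 1 + g) =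
        ((-1 : ℂ) ^ ((par M i + par M j) * (par M (m + 1 + g) + par M (m + 1 + g + 1)))) •
          (U.F (m + 1 + g) * U.Ec i j) := h2
    have hsign : ((-1 : ℂ) ^ ((par M i + par M j) * (par M m + par M (m + 1 + g)))) *
        ((-1 : ℂ) ^ ((par M i + par M j) * (par M (m + 1 + g) + par M (m + 1 + g + 1)))) =
        ((-1 : ℂ) ^ ((par M i + par M j) * (par M m + par M (m + 1 + (g + 1))))) := by
      rw [← pow_add, show m + 1 + (g + 1) = m + 1 + g + 1 from rfl]
      apply npow_mod2
      rcases par01 M i with h3 | h3 <;> rcases par01 M j with h4 | h4 <;>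
        simp only [h3, h4] <;> omega
    show U.Ec i j * (U.F (m + 1 + g) * U.Faux m g -
        Complex.exp (-(U.ℏ * (dd M (m + 1 + g) : ℂ))) • (U.Faux m g * U.F (m + 1 + g))) =
      ((-1 : ℂ) ^ ((par M i + par M j) * (par M m + par M (m + 1 + (g + 1))))) •
        ((U.F (m + 1 + g) * U.Faux m g -
          Complex.exp (-(U.ℏ * (dd M (m + 1 + g) : ℂ))) •
            (U.Faux m g * U.F (m + 1 + g))) * U.Ec i j)
    simp only [mul_sub, sub_mul, mul_smul_comm, smul_mul_assoc, mul_assoc, smul_sub,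
      smul_smul, h2', ih, liftL h2', liftL ih]
    match_scalars <;> (rw [← hsign]; ring)

lemma UqGL.Eaux_Fc (U : UqGL M N A) {i j m : ℕ} (hi : 1 ≤ i) (hj : j ≤ M + N) (him : i < m) :
    ∀ g, m + 1 + g < j →
      U.Eaux m g * U.Fc i j =
        ((-1 : ℂ) ^ ((par M i + par M j) * (par M m + par M (m + 1 + g)))) •
          (U.Fc i j * U.Eaux m g)
  | 0, hg => by
    have h := U.E_Faux_mid hi (j - i - 1) (by omega) m him (by omega)
    rw [show i + 1 + (j - i - 1) = j by omega] at h
    show U.E m * U.Fc i j = _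
    rw [show (U.Fc i j : A) = U.Faux i (j - i - 1) from rfl, h,
      show m + 1 + 0 = m + 1 from rfl]
    rfl
  | g + 1, hg => by
    have ih := U.Eaux_Fc hi hj him g (by omega)
    have h2 := U.E_Faux_mid hi (j - i - 1) (by omega) (m + 1 + g) (by omega) (by omega)
    rw [show i + 1 + (j - i - 1) = j by omega] at h2
    have h2' : U.E (m + 1 + g) * U.Fc i j =
        ((-1 : ℂ) ^ ((par M i + par M j) * (par M (m + 1 + g) + par M (m + 1 + g + 1)))) •
          (U.Fc i j * U.E (m + 1 + g)) := by
      rw [show (U.Fc i j : A) = U.Faux i (j - i - 1) from rfl, h2]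
    have hsign : ((-1 : ℂ) ^ ((par M i + par M j) * (par M m + par M (m + 1 + g)))) *
        ((-1 : ℂ) ^ ((par M i + par M j) * (par M (m + 1 + g) + par M (m + 1 + g + 1)))) =
        ((-1 : ℂ) ^ ((par M i + par M j) * (par M m + par M (m + 1 + (g + 1))))) := by
      rw [← pow_add, show m + 1 + (g + 1) = m + 1 + g + 1 from rfl]
      apply npow_mod2
      rcases par01 M i with h3 | h3 <;> rcases par01 M j with h4 | h4 <;>
        simp only [h3, h4] <;> omega
    show (U.Eaux m g * U.E (m + 1 + g) -
        Complex.exp (U.ℏ * (dd M (m + 1 + g) : ℂ)) • (U.E (m + 1 + g) * U.Eaux m g)) *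
          U.Fc i j =
      ((-1 : ℂ) ^ ((par M i + par M j) * (par M m + par M (m + 1 + (g + 1))))) •
        (U.Fc i j * (U.Eaux m g * U.E (m + 1 + g) -
          Complex.exp (U.ℏ * (dd M (m + 1 + g) : ℂ)) • (U.E (m + 1 + g) * U.Eaux m g)))
    simp only [mul_sub, sub_mul, mul_smul_comm, smul_mul_assoc, mul_assoc, smul_sub,
      smul_smul, h2', ih, liftL h2', liftL ih]
    match_scalars <;> (rw [← hsign]; ring)

end Assembly
/-- Proposition 4.9: for nested indices `i < m < n < j`,
`E_{ij} F_{mn} = (-1)^{[m]+[n]} F_{mn} E_{ij}` and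
`E_{mn} F_{ij} = (-1)^{[m]+[n]} F_{ij} E_{mn}`. -/
theorem stmt12 (M N : ℕ) (hM : 1 ≤ M) (hN : 1 ≤ N) (hMN : M ≠ N)
    {A : Type*} [Ring A] [Algebra ℂ A] (U : UqGL M N A)
    (i j m n : ℕ) (hi : 1 ≤ i) (him : i < m) (hmn : m < n) (hnj : n < j) (hj : j ≤ M + N) :
    U.Ec i j * U.Fc m n = ((-1 : ℂ) ^ (par M m + par M n)) • (U.Fc m n * U.Ec i j) ∧
    U.Ec m n * U.Fc i j = ((-1 : ℂ) ^ (par M m + par M n)) • (U.Fc i j * U.Ec m n) := by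
  have hsign : ((-1 : ℂ) ^ ((par M i + par M j) * (par M m + par M n))) =
      ((-1 : ℂ) ^ (par M m + par M n)) := by
    have m1 : par M i ≤ par M m := par_mono (by omega)
    have m2 : par M m ≤ par M n := par_mono (by omega)
    have m3 : par M n ≤ par M j := par_mono (by omega)
    apply npow_mod2
    rcases par01 M i with h3 | h3 <;> rcases par01 M m with h4 | h4 <;>
      rcases par01 M n with h5 | h5 <;> rcases par01 M j with h6 | h6 <;>
      simp only [h3, h4, h5, h6] at m1 m2 m3 ⊢ <;> omega
  constructor
  · have h := U.Ec_Faux hi hj him (n - m - 1) (by omega)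
    rw [show m + 1 + (n - m - 1) = n by omega] at h
    rw [show (U.Fc m n : A) = U.Faux m (n - m - 1) from rfl, h, hsign]
  · have h := U.Eaux_Fc hi hj him (n - m - 1) (by omega)
    rw [show m + 1 + (n - m - 1) = n by omega] at h
    rw [show (U.Ec m n : A) = U.Eaux m (n - m - 1) from rfl, h, hsign]
end
end

section
/- In U_q(gl(M|N)), for i < m < j: E_{ij} F_{mj} − (−1)^{([m]+[j])} F_{mj} E_{ij} = q^{−d_mK_m + d_jK_j} E_{im}, and E_{mj} F_{ij} − (−1)^{([m]+[j])} F_{ij} E_{mj} = F_{im} q^{d_mK_m − d_jK_j}. -/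
noncomputable section

variable {M N : ℕ} {A : Type*} [Ring A] [Algebra ℂ A]

/-!
Write `⟦a, b⟧_c = a b - c b a`, so that `E_{i,j+1} = ⟦E_{ij}, E_j⟧_{q_j}` and
`F_{m,j+1} = ⟦F_j, F_{mj}⟧_{q_j⁻¹}`. The first identity is proved by induction on `j ≥ m + 1`.
Whenever two of three elements commute, a Jacobi-type identity moves a `c`-commutator past the
third one. Since `F_j` commutes with `E_{ij}`, this reduces `⟦E_{i,j+1}, F_j⟧` to the Cartan
part of `⟦E_j, F_j⟧`, which gives `q^{-d_jK_j + d_{j+1}K_{j+1}} E_{ij}`; since `E_j` commutes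
with `F_{mj}`, it then reduces `⟦E_{i,j+1}, F_{m,j+1}⟧` to the induction hypothesis. The second
identity is the image of the first under the anti-automorphism `E_k ↔ F_k`,
`q^{νK_k} ↦ q^{-νK_k}`, `q ↦ q⁻¹`, realised as the representation `UqGL.dual` on the opposite
algebra.
-/
section QComm

variable {R B : Type*} [CommRing R] [Ring B] [Algebra R B]

def qComm (c : R) (a b : B) : B := a * b - c • (b * a)

theorem qComm_qComm_of_commute_right {X e f : B} (s q : R) (h : Commute X f) :
    qComm s (qComm q X e) f = qComm q X (qComm s e f) := by
  have h₁ : e * X * f = e * f * X := by rw [mul_assoc, h.eq, mul_assoc]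
  have h₂ : f * X * e = X * f * e := by rw [h.eq]
  simp only [qComm, mul_sub, sub_mul, smul_mul_assoc, mul_smul_comm, smul_sub, ← mul_assoc,
    h₁, h₂]
  module

theorem qComm_qComm_of_commute {X Y e : B} (σ q : R) (h : Commute e Y) :
    qComm σ (qComm q X e) Y = qComm q (qComm σ X Y) e := by
  have h₁ : X * e * Y = X * Y * e := by rw [mul_assoc, h.eq, mul_assoc]
  have h₂ : Y * e * X = e * Y * X := by rw [h.eq]
  simp only [qComm, mul_sub, sub_mul, smul_mul_assoc, mul_smul_comm, smul_sub, ← mul_assoc,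
    h₁, h₂]
  module

theorem qComm_qComm_right_eq_mul {X X' Y f k : B} (σ s r : R) (hf : qComm s X' f = k * X)
    (hY : qComm σ X' Y = 0) (hk : SemiconjBy k Y (r • Y)) :
    qComm (σ * s) X' (qComm r f Y) = k * qComm σ X Y := by
  rw [qComm, sub_eq_iff_eq_add'] at hf
  rw [qComm, sub_eq_zero] at hY
  have h₁ : X' * f * Y = (σ * s) • (f * Y * X') + k * X * Y := by
    rw [hf, add_mul, smul_mul_assoc, mul_assoc f, hY, mul_smul_comm, smul_smul, mul_comm s,
      ← mul_assoc]
  have h₂ : X' * Y * f = (σ * s) • (Y * f * X') + σ • (Y * k * X) := by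
    rw [hY, smul_mul_assoc, mul_assoc Y, hf, mul_add, smul_add, mul_smul_comm, smul_smul,
      ← mul_assoc, ← mul_assoc]
  have h₃ : r • (Y * k * X) = k * Y * X := by rw [hk.eq, smul_mul_assoc, smul_mul_assoc]
  simp only [qComm, mul_sub, sub_mul, smul_mul_assoc, mul_smul_comm, smul_sub, ← mul_assoc,
    h₁, h₂, smul_add, smul_smul]
  rw [mul_comm r σ, ← smul_smul σ r, h₃]
  module

theorem Commute.qComm_right {x a b : B} (ha : Commute x a) (hb : Commute x b) (c : R) :
    Commute x (qComm c a b) :=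
  (ha.mul_right hb).sub_right ((hb.mul_right ha).smul_right c)

theorem SemiconjBy.qComm_right {k a b : B} {z w : R} (ha : SemiconjBy k a (z • a))
    (hb : SemiconjBy k b (w • b)) (c : R) :
    SemiconjBy k (qComm c a b) ((z * w) • qComm c a b) := by
  have hab : SemiconjBy k (a * b) ((z * w) • (a * b)) := by
    simpa only [smul_mul_smul_comm] using ha.mul_right hb
  have hba : SemiconjBy k (b * a) ((z * w) • (b * a)) := by
    simpa only [smul_mul_smul_comm, mul_comm w z] using hb.mul_right ha
  rw [qComm, smul_sub, smul_comm (z * w) c]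
  exact hab.sub_right (hba.smul_right c)

theorem qComm_mul_eq_zero {l Z e : B} {q : R} (hl : SemiconjBy l e (q • e))
    (hZ : Commute Z e) : qComm q (l * Z) e = 0 := by
  rw [qComm, sub_eq_zero, mul_assoc, hZ.eq, ← mul_assoc, hl.eq, smul_mul_assoc, smul_mul_assoc,
    mul_assoc]

theorem MulOpposite.op_qComm (c : R) (a b : B) :
    MulOpposite.op (qComm c a b) = qComm c (MulOpposite.op b) (MulOpposite.op a) := by
  simp only [qComm, MulOpposite.op_sub, MulOpposite.op_mul, MulOpposite.op_smul]

end QComm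

section QCommField

variable {R B : Type*} [Field R] [Ring B] [Algebra R B]

theorem qComm_smul_sub_eq_mul {X kp km : B} {q : R} (hq : q - q⁻¹ ≠ 0)
    (hkp : SemiconjBy kp X (q⁻¹ • X)) (hkm : SemiconjBy km X (q • X)) :
    qComm q X ((q - q⁻¹)⁻¹ • (kp - km)) = km * X := by
  have hq₀ : q ≠ 0 := by rintro rfl; simp at hq
  have hq₂ : q ^ 2 - 1 ≠ 0 := by
    contrapose! hq
    field_simp
    linear_combination hq
  simp only [qComm, mul_smul_comm, smul_mul_assoc, mul_sub, sub_mul, hkp.eq, hkm.eq, smul_sub,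
    smul_smul]
  match_scalars <;> field_simp [sub_ne_zero.mp hq₂] <;> ring

end QCommField

namespace UqGL

open Complex MulOpposite

variable (U : UqGL M N A)

theorem exp_sub_exp_inv_ne_zero (k : ℕ) :
    exp (U.ℏ * dd M k) - (exp (U.ℏ * dd M k))⁻¹ ≠ 0 := by
  intro h
  have hsq : exp (2 * (U.ℏ * dd M k)) = 1 := by
    rw [two_mul, exp_add]
    nth_rewrite 2 [sub_eq_zero.mp h]
    exact mul_inv_cancel₀ (exp_ne_zero _)
  apply U.q_ne_one
  unfold dd at hsq
  split_ifs at hsq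
  · simpa using hsq
  · rw [← inv_inj, ← exp_neg]
    simpa [mul_comm] using hsq

theorem commute_E_F {s k : ℕ} (hs : 1 ≤ s) (hsMN : s < M + N) (hk : 1 ≤ k) (hkMN : k < M + N)
    (hne : s ≠ k) : Commute (U.E s) (U.F k) := by
  have h := U.EF s k hs hsMN hk hkMN
  rw [if_neg hne] at h
  unfold par at h
  split_ifs at h <;> first | omega | (norm_num [sub_eq_zero] at h; exact h)

theorem qComm_E_F_self {k : ℕ} (hk : 1 ≤ k) (hkMN : k < M + N) :
    qComm ((-1 : ℂ) ^ (par M k + par M (k + 1))) (U.E k) (U.F k) =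
      (exp (U.ℏ * dd M k) - exp (-(U.ℏ * dd M k)))⁻¹ •
        (U.K k (dd M k : ℂ) * U.K (k + 1) (-(dd M (k + 1) : ℂ)) -
          U.K k (-(dd M k : ℂ)) * U.K (k + 1) (dd M (k + 1) : ℂ)) := by
  have h := U.EF k k hk hkMN hk hkMN
  have hsign : (-1 : ℂ) ^ ((par M k + par M (k + 1)) * (par M k + par M (k + 1))) =
      (-1) ^ (par M k + par M (k + 1)) := by
    unfold par; split_ifs <;> norm_num
  rwa [if_pos rfl, hsign] at h

theorem Ec_succ_self (i : ℕ) : U.Ec i (i + 1) = U.E i := by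
  simp [Ec, Eaux]

theorem Fc_succ_self (i : ℕ) : U.Fc i (i + 1) = U.F i := by
  simp [Fc, Faux]

theorem Ec_succ {i j : ℕ} (hij : i < j) :
    U.Ec i (j + 1) = qComm (exp (U.ℏ * dd M j)) (U.Ec i j) (U.E j) := by
  obtain ⟨g, rfl⟩ := Nat.exists_eq_add_of_lt hij
  simp only [Ec, qComm, show i + g + 1 + 1 - i - 1 = g + 1 by omega,
    show i + g + 1 - i - 1 = g by omega, Eaux, add_right_comm i 1 g]

theorem Fc_succ {i j : ℕ} (hij : i < j) :
    U.Fc i (j + 1) = qComm (exp (-(U.ℏ * dd M j))) (U.F j) (U.Fc i j) := by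
  obtain ⟨g, rfl⟩ := Nat.exists_eq_add_of_lt hij
  simp only [Fc, qComm, show i + g + 1 + 1 - i - 1 = g + 1 by omega,
    show i + g + 1 - i - 1 = g by omega, Faux, add_right_comm i 1 g]

theorem commute_F_Ec {k i j : ℕ} (hk : 1 ≤ k) (hkMN : k < M + N) (hi : 1 ≤ i) (hij : i < j)
    (hj : j ≤ M + N) (hkij : k < i ∨ j ≤ k) : Commute (U.F k) (U.Ec i j) := by
  induction j, hij using Nat.le_induction with
  | base => rw [U.Ec_succ_self]; exact (U.commute_E_F hi (by omega) hk hkMN (by omega)).symm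
  | succ j hij ih =>
    rw [U.Ec_succ hij]
    exact (ih (by omega) (by omega)).qComm_right
      (U.commute_E_F (by omega) (by omega) hk hkMN (by omega)).symm _

theorem commute_E_Fc {k i j : ℕ} (hk : 1 ≤ k) (hkMN : k < M + N) (hi : 1 ≤ i) (hij : i < j)
    (hj : j ≤ M + N) (hkij : k < i ∨ j ≤ k) : Commute (U.E k) (U.Fc i j) := by
  induction j, hij using Nat.le_induction with
  | base => rw [U.Fc_succ_self]; exact U.commute_E_F hk hkMN hi (by omega) (by omega)
  | succ j hij ih =>
    rw [U.Fc_succ hij]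
    exact (U.commute_E_F hk hkMN (by omega) (by omega) (by omega)).qComm_right
      (ih (by omega) (by omega)) _

theorem commute_E_Ec {k i j : ℕ} (hkMN : k < M + N) (hi : 1 ≤ i) (hij : i < j) (hjk : j < k) :
    Commute (U.E k) (U.Ec i j) := by
  induction j, hij using Nat.le_induction with
  | base => rw [U.Ec_succ_self]; exact (U.EE_far i k hi hkMN hjk).symm
  | succ j hij ih =>
    rw [U.Ec_succ hij]
    exact (ih (by omega)).qComm_right (U.EE_far j k (by omega) hkMN hjk).symm _

theorem semiconjBy_K_E (s k : ℕ) (ν : ℂ) :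
    SemiconjBy (U.K s ν) (U.E k)
      (exp (U.ℏ * ν * ((if s = k then 1 else 0) - (if s = k + 1 then 1 else 0))) • U.E k) := by
  rw [SemiconjBy, smul_mul_assoc]
  exact U.K_E s k ν

theorem semiconjBy_K_F (s k : ℕ) (ν : ℂ) :
    SemiconjBy (U.K s ν) (U.F k)
      (exp (-(U.ℏ * ν * ((if s = k then 1 else 0) - (if s = k + 1 then 1 else 0)))) • U.F k) := by
  rw [SemiconjBy, smul_mul_assoc]
  exact U.K_F s k ν

theorem semiconjBy_K_Ec (s : ℕ) (ν : ℂ) {i j : ℕ} (hij : i < j) :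
    SemiconjBy (U.K s ν) (U.Ec i j)
      (exp (U.ℏ * ν * ((if s = i then 1 else 0) - (if s = j then 1 else 0))) • U.Ec i j) := by
  induction j, hij using Nat.le_induction with
  | base => rw [U.Ec_succ_self]; exact U.semiconjBy_K_E s i ν
  | succ j hij ih =>
    rw [U.Ec_succ hij]
    convert ih.qComm_right (U.semiconjBy_K_E s j ν) _ using 2
    rw [← exp_add]
    ring_nf

theorem semiconjBy_K_Fc (s : ℕ) (ν : ℂ) {i j : ℕ} (hij : i < j) :
    SemiconjBy (U.K s ν) (U.Fc i j)
      (exp (-(U.ℏ * ν * ((if s = i then 1 else 0) - (if s = j then 1 else 0)))) • U.Fc i j) := by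
  induction j, hij using Nat.le_induction with
  | base => rw [U.Fc_succ_self]; exact U.semiconjBy_K_F s i ν
  | succ j hij ih =>
    rw [U.Fc_succ hij]
    convert (U.semiconjBy_K_F s j ν).qComm_right ih _ using 2
    rw [← exp_add]
    ring_nf

theorem semiconjBy_K_E_self (k : ℕ) (ν : ℂ) :
    SemiconjBy (U.K k ν) (U.E k) (exp (U.ℏ * ν) • U.E k) := by
  simpa using U.semiconjBy_K_E k k ν

theorem commute_K_E {s k : ℕ} (ν : ℂ) (hsk : s ≠ k) (hsk' : s ≠ k + 1) :
    Commute (U.K s ν) (U.E k) := by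
  simpa [Commute, hsk, hsk'] using U.semiconjBy_K_E s k ν

theorem semiconjBy_K_Ec_right (ν : ℂ) {i j : ℕ} (hij : i < j) :
    SemiconjBy (U.K j ν) (U.Ec i j) (exp (-(U.ℏ * ν)) • U.Ec i j) := by
  simpa [hij.ne'] using U.semiconjBy_K_Ec j ν hij

theorem semiconjBy_K_Fc_right (ν : ℂ) {i j : ℕ} (hij : i < j) :
    SemiconjBy (U.K j ν) (U.Fc i j) (exp (U.ℏ * ν) • U.Fc i j) := by
  simpa [hij.ne'] using U.semiconjBy_K_Fc j ν hij

theorem commute_K_Ec {s : ℕ} (ν : ℂ) {i j : ℕ} (hij : i < j) (hsi : s ≠ i) (hsj : s ≠ j) :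
    Commute (U.K s ν) (U.Ec i j) := by
  simpa [Commute, hsi, hsj] using U.semiconjBy_K_Ec s ν hij

theorem commute_K_Fc {s : ℕ} (ν : ℂ) {i j : ℕ} (hij : i < j) (hsi : s ≠ i) (hsj : s ≠ j) :
    Commute (U.K s ν) (U.Fc i j) := by
  simpa [Commute, hsi, hsj] using U.semiconjBy_K_Fc s ν hij

theorem K_neg_mul_K_mul_K_mul_K (a b c : ℕ) (α β ν : ℂ) :
    U.K c (-ν) * U.K b β * (U.K a α * U.K c ν) = U.K a α * U.K b β := by
  rw [U.K_comm a c, mul_assoc, ← mul_assoc (U.K b β), U.K_comm b c, mul_assoc, ← mul_assoc,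
    U.K_add, neg_add_cancel, U.K_zero, one_mul, U.K_comm]

theorem qComm_Ec_succ_F {i j : ℕ} (hi : 1 ≤ i) (hij : i < j) (hj : j < M + N) :
    qComm ((-1 : ℂ) ^ (par M j + par M (j + 1))) (U.Ec i (j + 1)) (U.F j) =
      U.K j (-(dd M j : ℂ)) * U.K (j + 1) (dd M (j + 1) : ℂ) * U.Ec i j := by
  have hkp : SemiconjBy (U.K j (dd M j : ℂ) * U.K (j + 1) (-(dd M (j + 1) : ℂ))) (U.Ec i j)
      ((exp (U.ℏ * dd M j))⁻¹ • U.Ec i j) := by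
    rw [← exp_neg]
    exact (U.semiconjBy_K_Ec_right _ hij).mul_left
      (U.commute_K_Ec (s := j + 1) _ hij (by omega) (by omega))
  have hkm : SemiconjBy (U.K j (-(dd M j : ℂ)) * U.K (j + 1) (dd M (j + 1) : ℂ)) (U.Ec i j)
      (exp (U.ℏ * dd M j) • U.Ec i j) := by
    simpa only [mul_neg, neg_neg] using (U.semiconjBy_K_Ec_right (-(dd M j : ℂ)) hij).mul_left
      (U.commute_K_Ec (s := j + 1) (dd M (j + 1) : ℂ) hij (by omega) (by omega))
  rw [U.Ec_succ hij, qComm_qComm_of_commute_right _ _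
    (U.commute_F_Ec (k := j) (by omega) hj hi hij (by omega) (by omega)).symm,
    U.qComm_E_F_self (by omega) hj, exp_neg]
  exact qComm_smul_sub_eq_mul (U.exp_sub_exp_inv_ne_zero j) hkp hkm

theorem qComm_Ec_Fc {i m j : ℕ} (hi : 1 ≤ i) (him : i < m) (hmj : m < j) (hj : j ≤ M + N) :
    qComm ((-1 : ℂ) ^ (par M m + par M j)) (U.Ec i j) (U.Fc m j) =
      U.K m (-(dd M m : ℂ)) * U.K j (dd M j : ℂ) * U.Ec i m := by
  induction j, hmj using Nat.le_induction with
  | base => rw [U.Fc_succ_self]; exact U.qComm_Ec_succ_F hi him (by omega)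
  | succ j hmj ih =>
    have hXY := ih (by omega)
    have hl : SemiconjBy (U.K m (-(dd M m : ℂ)) * U.K j (dd M j : ℂ)) (U.E j)
        (exp (U.ℏ * dd M j) • U.E j) :=
      SemiconjBy.mul_left ((U.commute_K_E _ (by omega) (by omega)).smul_right _)
        (U.semiconjBy_K_E_self _ _)
    have hX'Y : qComm ((-1 : ℂ) ^ (par M m + par M j)) (U.Ec i (j + 1)) (U.Fc m j) = 0 := by
      rw [U.Ec_succ (by omega), qComm_qComm_of_commute _ _
        (U.commute_E_Fc (k := j) (by omega) (by omega) (by omega) hmj (by omega) (by omega)), hXY]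
      exact qComm_mul_eq_zero hl (U.commute_E_Ec (k := j) (by omega) hi him hmj).symm
    have hkY : SemiconjBy (U.K j (-(dd M j : ℂ)) * U.K (j + 1) (dd M (j + 1) : ℂ)) (U.Fc m j)
        (exp (-(U.ℏ * dd M j)) • U.Fc m j) := by
      simpa only [mul_neg] using (U.semiconjBy_K_Fc_right (-(dd M j : ℂ)) hmj).mul_left
        (U.commute_K_Fc (s := j + 1) (dd M (j + 1) : ℂ) hmj (by omega) (by omega))
    have hsign : (-1 : ℂ) ^ (par M m + par M (j + 1)) =
        (-1) ^ (par M m + par M j) * (-1) ^ (par M j + par M (j + 1)) := by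
      rw [← pow_add, show par M m + par M j + (par M j + par M (j + 1)) =
        par M m + par M (j + 1) + 2 * par M j by ring,
        pow_add _ _ (2 * par M j), pow_mul]
      norm_num
    rw [U.Fc_succ hmj, hsign, qComm_qComm_right_eq_mul _ _ _
      (U.qComm_Ec_succ_F hi (by omega) (by omega)) hX'Y hkY, hXY, ← mul_assoc,
      U.K_neg_mul_K_mul_K_mul_K]

def dual : UqGL M N Aᵐᵒᵖ where
  ℏ := -U.ℏ
  q_ne_one := by
    rw [mul_neg, exp_neg, Ne, inv_eq_one]
    exact U.q_ne_one
  E k := op (U.F k)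
  F k := op (U.E k)
  K k ν := op (U.K k (-ν))
  K_zero k := by rw [neg_zero, U.K_zero, op_one]
  K_add k ν μ := by rw [← op_mul, U.K_add, neg_add, add_comm]
  K_comm k l ν μ := by rw [← op_mul, ← op_mul, U.K_comm]
  K_E k l ν := by
    apply unop_injective
    simp only [unop_mul, unop_op, unop_smul, U.K_F k l (-ν), smul_smul, ← exp_add]
    ring_nf
    rw [exp_zero, one_smul]
  K_F k l ν := by
    apply unop_injective
    simp only [unop_mul, unop_op, unop_smul, U.K_E k l (-ν), smul_smul, ← exp_add]
    ring_nf
    rw [exp_zero, one_smul]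
  EF i j hi hiMN hj hjMN := by
    apply unop_injective
    have h := U.EF j i hj hjMN hi hiMN
    rw [mul_comm (par M j + _)] at h
    simp only [unop_sub, unop_mul, unop_op, unop_smul, h]
    split_ifs with hij
    · subst hij
      simp only [unop_smul, unop_sub, unop_mul, unop_op, neg_neg, neg_mul]
      rw [U.K_comm (j + 1), U.K_comm (j + 1), ← neg_sub (U.K j _ * _), smul_neg, ← neg_smul,
        ← inv_neg, neg_sub]
    · omega
    · omega
    · rfl
  EE_far i j hi hj hij := by rw [← op_mul, ← op_mul, U.FF_far i j hi hj hij]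
  FF_far i j hi hj hij := by rw [← op_mul, ← op_mul, U.EE_far i j hi hj hij]
  E_M_sq := by rw [← op_mul, U.F_M_sq, op_zero]
  F_M_sq := by rw [← op_mul, U.E_M_sq, op_zero]
  serre_E_down i h₁ h₂ h₃ := by
    apply unop_injective
    simp only [unop_add, unop_sub, unop_mul, unop_op, unop_smul, unop_zero]
    convert U.serre_F_down i h₁ h₂ h₃ using 2; simp only [mul_assoc, neg_neg, add_comm]
  serre_F_down i h₁ h₂ h₃ := by
    apply unop_injective
    simp only [unop_add, unop_sub, unop_mul, unop_op, unop_smul, unop_zero]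
    convert U.serre_E_down i h₁ h₂ h₃ using 2; simp only [mul_assoc, neg_neg, add_comm]
  serre_E_up i h₁ h₂ h₃ := by
    apply unop_injective
    simp only [unop_add, unop_sub, unop_mul, unop_op, unop_smul, unop_zero]
    convert U.serre_F_up i h₁ h₂ h₃ using 2; simp only [mul_assoc, neg_neg, add_comm]
  serre_F_up i h₁ h₂ h₃ := by
    apply unop_injective
    simp only [unop_add, unop_sub, unop_mul, unop_op, unop_smul, unop_zero]
    convert U.serre_E_up i h₁ h₂ h₃ using 2; simp only [mul_assoc, neg_neg, add_comm]
  serre_quartic_E hM hN := by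
    apply unop_injective
    simp only [unop_add, unop_sub, unop_mul, unop_op, unop_smul, unop_zero, neg_neg]
    exact U.serre_quartic_F hM hN
  serre_quartic_F hM hN := by
    apply unop_injective
    simp only [unop_add, unop_sub, unop_mul, unop_op, unop_smul, unop_zero, neg_neg]
    exact U.serre_quartic_E hM hN

theorem dual_K (k : ℕ) (ν : ℂ) : U.dual.K k ν = op (U.K k (-ν)) := rfl

theorem dual_Ec {i j : ℕ} (hij : i < j) : U.dual.Ec i j = op (U.Fc i j) := by
  induction j, hij using Nat.le_induction with
  | base => rw [Ec_succ_self, Fc_succ_self]; rfl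
  | succ j hij ih =>
    rw [Ec_succ _ hij, Fc_succ _ hij, ih, op_qComm]
    simp only [dual, neg_mul]

theorem dual_Fc {i j : ℕ} (hij : i < j) : U.dual.Fc i j = op (U.Ec i j) := by
  induction j, hij using Nat.le_induction with
  | base => rw [Ec_succ_self, Fc_succ_self]; rfl
  | succ j hij ih =>
    rw [Ec_succ _ hij, Fc_succ _ hij, ih, op_qComm]
    simp only [dual, neg_mul, neg_neg]

end UqGL

theorem stmt14_general (M N : ℕ)
    {A : Type*} [Ring A] [Algebra ℂ A] (U : UqGL M N A)
    (i m j : ℕ) (hi : 1 ≤ i) (him : i < m) (hmj : m < j) (hj : j ≤ M + N) :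
    U.Ec i j * U.Fc m j - ((-1 : ℂ) ^ (par M m + par M j)) • (U.Fc m j * U.Ec i j) =
      U.K m (-(dd M m : ℂ)) * U.K j (dd M j : ℂ) * U.Ec i m ∧
    U.Ec m j * U.Fc i j - ((-1 : ℂ) ^ (par M m + par M j)) • (U.Fc i j * U.Ec m j) =
      U.Fc i m * (U.K m (dd M m : ℂ) * U.K j (-(dd M j : ℂ))) := by
  refine ⟨U.qComm_Ec_Fc hi him hmj hj, ?_⟩
  have h := U.dual.qComm_Ec_Fc hi him hmj hj
  rw [U.dual_Ec (him.trans hmj), U.dual_Fc hmj, U.dual_Ec him, ← MulOpposite.op_qComm, U.dual_K,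
    U.dual_K, neg_neg] at h
  rw [← qComm, U.K_comm m j]
  apply MulOpposite.op_injective
  rw [h, MulOpposite.op_mul, MulOpposite.op_mul]

/-- Proposition 4.10, branch `C_III`: for `i < m < j`,
`E_{ij} F_{mj} - (-1)^{[m]+[j]} F_{mj} E_{ij} = q^{-d_mK_m + d_jK_j} E_{im}` and
`E_{mj} F_{ij} - (-1)^{[m]+[j]} F_{ij} E_{mj} = F_{im} q^{d_mK_m - d_jK_j}`. -/
theorem stmt14 (M N : ℕ) (hM : 1 ≤ M) (hN : 1 ≤ N) (hMN : M ≠ N)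
    {A : Type*} [Ring A] [Algebra ℂ A] (U : UqGL M N A)
    (i m j : ℕ) (hi : 1 ≤ i) (him : i < m) (hmj : m < j) (hj : j ≤ M + N) :
    U.Ec i j * U.Fc m j - ((-1 : ℂ) ^ (par M m + par M j)) • (U.Fc m j * U.Ec i j) =
      U.K m (-(dd M m : ℂ)) * U.K j (dd M j : ℂ) * U.Ec i m ∧
    U.Ec m j * U.Fc i j - ((-1 : ℂ) ^ (par M m + par M j)) • (U.Fc i j * U.Ec m j) =
      U.Fc i m * (U.K m (dd M m : ℂ) * U.K j (-(dd M j : ℂ))) :=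
  stmt14_general M N U i m j hi him hmj hj
end
end
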